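/- arXiv:1901.04538 — 4 statements merged into one kernel-verified Lean document; each statement's English description precedes it below -/
import Mathlib

section
/- Let Γ be a simplicial graph and 𝒢 = {G_u : u ∈ V(Γ)} a collection of nontrivial groups. A word s₁⋯sₙ written over the union of the vertex-groups (with each sᵢ ≠ 1) has minimal length among all words over the union of vertex-groups representing the same element of the graph product Γ𝒢 if and only if it is graphically reduced. -/
open Monoid

def graphProductRels {V : Type*} (Γ : SimpleGraph V) (G : V → Type*) [∀ v, Group (G v)] :
    Set (Monoid.CoprodI G) :=
  {x | ∃ (u v : V) (g : G u) (h : G v), Γ.Adj u v ∧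
    x = CoprodI.of g * CoprodI.of h * (CoprodI.of g)⁻¹ * (CoprodI.of h)⁻¹}

def GraphProduct {V : Type*} (Γ : SimpleGraph V) (G : V → Type*) [∀ v, Group (G v)] : Type _ :=
  Monoid.CoprodI G ⧸ Subgroup.normalClosure (graphProductRels Γ G)

instance {V : Type*} (Γ : SimpleGraph V) (G : V → Type*) [∀ v, Group (G v)] :
    Group (GraphProduct Γ G) := by
  unfold GraphProduct; infer_instance

/-- The canonical map from a vertex group to the graph product. -/
def GraphProduct.of {V : Type*} (Γ : SimpleGraph V) (G : V → Type*) [∀ v, Group (G v)] {u : V} :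
    G u →* GraphProduct Γ G :=
  (QuotientGroup.mk' (Subgroup.normalClosure (graphProductRels Γ G))).comp CoprodI.of

/-- The element of the graph product represented by a word over the union of vertex groups. -/
def wordProd {V : Type*} (Γ : SimpleGraph V) (G : V → Type*) [∀ v, Group (G v)]
    (l : List (Σ u, G u)) : GraphProduct Γ G :=
  (l.map fun s => GraphProduct.of Γ G s.2).prod

/-- A word over the union of the vertex groups is graphically reduced if all its syllables
are nontrivial and any two syllables in the same vertex group are separated by a syllable
in a non-adjacent vertex group. -/
def GraphicallyReduced {V : Type*} (Γ : SimpleGraph V) (G : V → Type*) [∀ v, Group (G v)]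
    (l : List (Σ u, G u)) : Prop :=
  (∀ s ∈ l, s.2 ≠ (1 : G s.1)) ∧
  ∀ (i j : ℕ) (hi : i < l.length) (hj : j < l.length), i < j →
    (l.get ⟨i, hi⟩).1 = (l.get ⟨j, hj⟩).1 →
    ∃ (k : ℕ) (hk : k < l.length), i < k ∧ k < j ∧
      ¬ Γ.Adj (l.get ⟨i, hi⟩).1 (l.get ⟨k, hk⟩).1

/-- Swapping two consecutive syllables lying in adjacent vertex groups. -/
def AdjSwap {V : Type*} (Γ : SimpleGraph V) (G : V → Type*) [∀ v, Group (G v)]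
    (l l' : List (Σ u, G u)) : Prop :=
  ∃ (w₁ w₂ : List (Σ u, G u)) (s t : Σ u, G u), Γ.Adj s.1 t.1 ∧
    l = w₁ ++ s :: t :: w₂ ∧ l' = w₁ ++ t :: s :: w₂

set_option linter.unusedSectionVars false
set_option maxHeartbeats 1000000

namespace GPaux

variable {V : Type*} (Γ : SimpleGraph V) (G : V → Type*) [∀ v, Group (G v)]

local notation "W" => List (Σ u, G u)

variable {Γ G}

lemma of_comm {u v : V} (adj : Γ.Adj u v) (g : G u) (h : G v) :
    GraphProduct.of Γ G g * GraphProduct.of Γ G h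
      = GraphProduct.of Γ G h * GraphProduct.of Γ G g := by
  have hmem : (CoprodI.of h * CoprodI.of g)⁻¹ * (CoprodI.of g * CoprodI.of h) ∈
      Subgroup.normalClosure (graphProductRels Γ G) := by
    apply Subgroup.subset_normalClosure
    refine ⟨u, v, g⁻¹, h⁻¹, adj, ?_⟩
    simp [mul_assoc]
  have : (QuotientGroup.mk' (Subgroup.normalClosure (graphProductRels Γ G)))
      (CoprodI.of h * CoprodI.of g) =
      (QuotientGroup.mk' (Subgroup.normalClosure (graphProductRels Γ G)))
      (CoprodI.of g * CoprodI.of h) := by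
    rw [QuotientGroup.mk'_apply, QuotientGroup.mk'_apply, QuotientGroup.eq]
    exact hmem
  simp only [GraphProduct.of, MonoidHom.comp_apply, ← map_mul]
  exact this.symm

@[simp] lemma wordProd_nil : wordProd Γ G [] = 1 := rfl

@[simp] lemma wordProd_cons (s : Σ u, G u) (l : W) :
    wordProd Γ G (s :: l) = GraphProduct.of Γ G s.2 * wordProd Γ G l := by
  simp [wordProd]

@[simp] lemma wordProd_append (l₁ l₂ : W) :
    wordProd Γ G (l₁ ++ l₂) = wordProd Γ G l₁ * wordProd Γ G l₂ := by
  simp [wordProd]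

lemma of_comm_prod {u : V} (g : G u) (m : W) (hm : ∀ t ∈ m, Γ.Adj u t.1) :
    GraphProduct.of Γ G g * wordProd Γ G m = wordProd Γ G m * GraphProduct.of Γ G g := by
  induction m with
  | nil => simp
  | cons t m ih =>
    have h1 : Γ.Adj u t.1 := hm t (by simp)
    rw [wordProd_cons, ← mul_assoc, of_comm h1 g t.2, mul_assoc,
      ih (fun x hx => hm x (by simp [hx]))]
    simp [mul_assoc]

lemma wordProd_adjSwap {l l' : W} (h : AdjSwap Γ G l l') :
    wordProd Γ G l = wordProd Γ G l' := by
  obtain ⟨w₁, w₂, s, t, adj, rfl, rfl⟩ := h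
  simp [← mul_assoc, of_comm adj s.2 t.2]

lemma sigma_eta {v : V} (s : Σ u, G u) (h : s.1 = v) :
    (⟨v, h ▸ s.2⟩ : Σ u, G u) = s := by
  subst h; rfl

/-- If a word with nontrivial syllables is not graphically reduced, there is a strictly
shorter word with the same product. -/
lemma exists_shorter {l : W} (hl : ∀ s ∈ l, s.2 ≠ (1 : G s.1))
    (hnr : ¬ GraphicallyReduced Γ G l) :
    ∃ l' : W, wordProd Γ G l' = wordProd Γ G l ∧ l'.length < l.length := by
  classical
  rw [GraphicallyReduced, not_and_or] at hnr
  rcases hnr with h | h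
  · exact absurd hl h
  push_neg at h
  obtain ⟨i, j, hi, hj, hij, hfst, hall⟩ := h
  simp only [List.get_eq_getElem] at hfst hall
  set u : V := (l[i]'hi).1 with hu
  set a : G u := (l[i]'hi).2 with ha
  have hfst' : (l[j]'hj).1 = u := hfst.symm
  set b : G u := hfst' ▸ (l[j]'hj).2 with hb
  have hsj : (⟨u, b⟩ : Σ u, G u) = l[j]'hj := sigma_eta _ hfst'
  have hsi : (⟨u, a⟩ : Σ u, G u) = l[i]'hi := rfl
  set l₁ := l.take i with hl₁
  set m := (l.drop (i + 1)).take (j - i - 1) with hm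
  set l₃ := l.drop (j + 1) with hl₃
  have hmlen : m.length = j - i - 1 := by
    simp [hm, List.length_take, List.length_drop]
    omega
  have hdecomp : l = l₁ ++ (⟨u, a⟩ : Σ u, G u) :: (m ++ (⟨u, b⟩ : Σ u, G u) :: l₃) := by
    rw [hsj, hsi]
    conv_lhs => rw [← List.take_append_drop i l]
    rw [List.drop_eq_getElem_cons hi]
    congr 1
    congr 1
    conv_lhs => rw [← List.take_append_drop (j - i - 1) (l.drop (i+1))]
    rw [List.drop_drop]
    have h2 : i + 1 + (j - i - 1) = j := by omega
    rw [h2, List.drop_eq_getElem_cons hj]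
  have hmadj : ∀ t ∈ m, Γ.Adj u t.1 := by
    intro t ht
    obtain ⟨k0, hk0, rfl⟩ := List.getElem_of_mem ht
    simp only [hm, List.getElem_take, List.getElem_drop]
    exact hall (i + 1 + k0) (by rw [hmlen] at hk0; omega)
      (by omega) (by rw [hmlen] at hk0; omega)
  refine ⟨l₁ ++ m ++ (if a * b = 1 then [] else [⟨u, a * b⟩]) ++ l₃, ?_, ?_⟩
  · have hcomm := of_comm_prod a m hmadj
    have hofab : wordProd Γ G (if a * b = 1 then ([] : W) else [⟨u, a * b⟩])
        = GraphProduct.of Γ G a * GraphProduct.of Γ G b := by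
      rw [← map_mul]
      split
      · next hab => simp [hab]
      · simp
    conv_rhs => rw [hdecomp]
    simp only [wordProd_append, wordProd_cons, hofab]
    conv_rhs => rw [← mul_assoc (GraphProduct.of Γ G a) (wordProd Γ G m), hcomm]
    simp [mul_assoc]
  · have hlen := congrArg List.length hdecomp
    simp only [List.length_append, List.length_cons] at hlen ⊢
    split <;> simp <;> omega


/-! ### The reduced predicate with getElem -/

variable (Γ G) in
def Red (l : W) : Prop :=
  (∀ s ∈ l, s.2 ≠ (1 : G s.1)) ∧
  ∀ (i j : ℕ) (hi : i < l.length) (hj : j < l.length), i < j →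
    (l[i]'hi).1 = (l[j]'hj).1 →
    ∃ (k : ℕ) (hk : k < l.length), i < k ∧ k < j ∧
      ¬ Γ.Adj (l[i]'hi).1 (l[k]'hk).1

lemma red_iff {l : W} : GraphicallyReduced Γ G l ↔ Red Γ G l := Iff.rfl

lemma red_nil : Red Γ G [] := by
  constructor
  · simp
  · intro i j hi; simp at hi

lemma red_tail {s : Σ u, G u} {l : W} (h : Red Γ G (s :: l)) : Red Γ G l := by
  obtain ⟨h1, h2⟩ := h
  constructor
  · exact fun t ht => h1 t (List.mem_cons_of_mem _ ht)
  · intro i j hi hj hij hfst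
    obtain ⟨k, hk, h3, h4, h5⟩ := h2 (i+1) (j+1) (by simpa using hi) (by simpa using hj)
      (by omega) (by simpa using hfst)
    obtain ⟨k', rfl⟩ : ∃ k', k = k' + 1 := ⟨k - 1, by omega⟩
    simp only [List.getElem_cons_succ, List.length_cons] at h5 hk
    exact ⟨k', by omega, by omega, by omega, h5⟩

/-! ### Front indices -/

variable (Γ) in
def FrontIdx (l : W) (v : V) (k : ℕ) : Prop :=
  ∃ hk : k < l.length, (l[k]'hk).1 = v ∧
    ∀ j (hj : j < k), Γ.Adj v ((l[j]'(hj.trans hk)).1)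

lemma FrontIdx.lt {l : W} {v k} (h : FrontIdx Γ l v k) : k < l.length := h.choose

lemma FrontIdx.fst {l : W} {v k} (h : FrontIdx Γ l v k) : (l[k]'h.lt).1 = v :=
  h.choose_spec.1

lemma FrontIdx.adj {l : W} {v k} (h : FrontIdx Γ l v k) :
    ∀ j (hj : j < k), Γ.Adj v ((l[j]'(hj.trans h.lt)).1) := h.choose_spec.2

lemma frontIdx_unique {l : W} {v k k'} (h : FrontIdx Γ l v k) (h' : FrontIdx Γ l v k') :
    k = k' := by
  by_contra hne
  rcases Nat.lt_or_ge k k' with hlt | hge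
  · exact (Γ.irrefl) (h.fst ▸ h'.adj k hlt)
  · exact (Γ.irrefl) (h'.fst ▸ h.adj k' (by omega))

lemma frontIdx_cons_zero {s : Σ u, G u} {l : W} {v} (h : s.1 = v) :
    FrontIdx Γ (s :: l) v 0 :=
  ⟨by simp, by simpa using h, fun j hj => by omega⟩

lemma frontIdx_cons_succ {s : Σ u, G u} {l : W} {v k} (hadj : Γ.Adj v s.1)
    (h : FrontIdx Γ l v k) : FrontIdx Γ (s :: l) v (k + 1) := by
  refine ⟨by simp [Nat.succ_lt_succ h.lt], by simpa using h.fst, ?_⟩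
  intro j hj
  match j with
  | 0 => simpa using hadj
  | j + 1 => simpa using h.adj j (by omega)

lemma frontIdx_of_cons {s : Σ u, G u} {l : W} {v k} (h : FrontIdx Γ (s :: l) v (k + 1)) :
    Γ.Adj v s.1 ∧ FrontIdx Γ l v k := by
  have h0 := h.adj 0 (by omega)
  simp at h0
  refine ⟨h0, ⟨by have := h.lt; simpa using this, by have := h.fst; simpa using this, ?_⟩⟩
  intro j hj
  have := h.adj (j+1) (by omega)
  simpa using this

lemma exists_frontIdx_cons_iff {s : Σ u, G u} {l : W} {v} :
    (∃ k, FrontIdx Γ (s :: l) v k) ↔ (s.1 = v ∨ (Γ.Adj v s.1 ∧ ∃ k, FrontIdx Γ l v k)) := by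
  constructor
  · rintro ⟨k, hk⟩
    match k with
    | 0 => exact Or.inl (by have := hk.fst; simpa using this)
    | k + 1 =>
      obtain ⟨h1, h2⟩ := frontIdx_of_cons hk
      exact Or.inr ⟨h1, k, h2⟩
  · rintro (h | ⟨h1, k, h2⟩)
    · exact ⟨0, frontIdx_cons_zero h⟩
    · exact ⟨k + 1, frontIdx_cons_succ h1 h2⟩

lemma frontIdx_congr_fst {l l' : W} {v k} (h : l.map Sigma.fst = l'.map Sigma.fst)
    (hf : FrontIdx Γ l v k) : FrontIdx Γ l' v k := by
  have hlen : l.length = l'.length := by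
    have := congrArg List.length h; simpa using this
  have hget : ∀ (j : ℕ) (hj : j < l.length), (l[j]'hj).1 = (l'[j]'(hlen ▸ hj)).1 := by
    intro j hj
    have := List.getElem_of_eq h (i := j) (by simpa using hj)
    simpa using this
  exact ⟨hlen ▸ hf.lt, (hget k hf.lt).symm.trans hf.fst,
    fun j hj => (hget j (hj.trans hf.lt)) ▸ hf.adj j hj⟩

lemma red_congr_fst {l l' : W} (h : l.map Sigma.fst = l'.map Sigma.fst)
    (h2 : ∀ s ∈ l', s.2 ≠ (1 : G s.1)) (hr : Red Γ G l) : Red Γ G l' := by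
  have hlen : l.length = l'.length := by
    have := congrArg List.length h; simpa using this
  have hget : ∀ (j : ℕ) (hj : j < l.length), (l[j]'hj).1 = (l'[j]'(hlen ▸ hj)).1 := by
    intro j hj
    have := List.getElem_of_eq h (i := j) (by simpa using hj)
    simpa using this
  refine ⟨h2, ?_⟩
  intro i j hi hj hij hfst
  obtain ⟨k, hk, h3, h4, h5⟩ := hr.2 i j (hlen ▸ hi) (hlen ▸ hj) hij
    (by rw [hget i, hget j] <;> first | exact hfst | omega)
  exact ⟨k, hlen ▸ hk, h3, h4, by rw [← hget i, ← hget k] <;> first | exact h5 | omega⟩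


/-! ### Front index transfer lemmas -/

lemma getElem_eraseIdx_lt {l : W} {k j : ℕ} (hj : j < (l.eraseIdx k).length) (h : j < k) :
    (l.eraseIdx k)[j]'hj = l[j]'(by rw [List.length_eraseIdx] at hj; split at hj <;> omega) := by
  rw [List.getElem_eraseIdx]
  simp [h]

lemma getElem_eraseIdx_ge {l : W} {k j : ℕ} (hj : j < (l.eraseIdx k).length) (h : k ≤ j) :
    (l.eraseIdx k)[j]'hj = l[j+1]'(by rw [List.length_eraseIdx] at hj; split at hj <;> omega) := by
  rw [List.getElem_eraseIdx]
  simp [Nat.not_lt.2 h]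

lemma getElem_idx_congr {l : W} {i j : ℕ} (h : i = j) {hi : i < l.length} :
    l[i]'hi = l[j]'(h ▸ hi) := by subst h; rfl

/-- After erasing the front occurrence of `v` in a reduced word, there is no front
occurrence of `v` anymore. -/
lemma no_frontIdx_eraseIdx {l : W} {v k} (hred : Red Γ G l) (hf : FrontIdx Γ l v k) :
    ¬ ∃ k', FrontIdx Γ (l.eraseIdx k) v k' := by
  rintro ⟨k', hk'⟩
  have hlen : (l.eraseIdx k).length = l.length - 1 := by
    simp [List.length_eraseIdx, hf.lt]
  have hkl := hf.lt
  have hk'l := hk'.lt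
  rcases Nat.lt_or_ge k' k with h | h
  · have h2 : (l[k']'(by omega)).1 = v := by
      rw [← getElem_eraseIdx_lt hk'.lt h]; exact hk'.fst
    exact Γ.irrefl (h2 ▸ hf.adj k' h)
  · have hk'1 : k' + 1 < l.length := by omega
    have h2 : (l[k'+1]'hk'1).1 = v := by
      rw [← getElem_eraseIdx_ge hk'.lt h]; exact hk'.fst
    obtain ⟨p, hp, h3, h4, h5⟩ := hred.2 k (k'+1) hf.lt hk'1 (by omega) (hf.fst.trans h2.symm)
    rw [hf.fst] at h5
    apply h5
    have hple : p - 1 < k' := by omega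
    have := hk'.adj (p-1) hple
    rwa [getElem_eraseIdx_ge (by omega) (by omega),
      getElem_idx_congr (show p - 1 + 1 = p by omega)] at this

lemma frontIdx_eraseIdx_of_adj {l : W} {u v : V} {k m : ℕ} (hadj : Γ.Adj u v)
    (hf : FrontIdx Γ l v k) (hm : FrontIdx Γ l u m) :
    FrontIdx Γ (l.eraseIdx k) u (if m < k then m else m - 1) := by
  have hmk : m ≠ k := by
    intro h
    subst h
    exact hadj.ne (hm.fst.symm.trans hf.fst)
  have hlen : (l.eraseIdx k).length = l.length - 1 := by
    simp [List.length_eraseIdx, hf.lt]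
  have hkl := hf.lt
  have hml := hm.lt
  rcases Nat.lt_or_ge m k with h | h
  · rw [if_pos h]
    refine ⟨by omega, ?_, ?_⟩
    · rw [getElem_eraseIdx_lt _ h]; exact hm.fst
    · intro j hj
      rw [getElem_eraseIdx_lt _ (by omega)]
      exact hm.adj j hj
  · have h' : k < m := by omega
    rw [if_neg (by omega)]
    refine ⟨by omega, ?_, ?_⟩
    · rw [getElem_eraseIdx_ge _ (by omega), getElem_idx_congr (show m - 1 + 1 = m by omega)]
      exact hm.fst
    · intro j hj
      rcases Nat.lt_or_ge j k with hjk | hjk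
      · rw [getElem_eraseIdx_lt _ hjk]
        exact hm.adj j (by omega)
      · rw [getElem_eraseIdx_ge _ hjk]
        exact hm.adj (j+1) (by omega)

lemma exists_frontIdx_of_eraseIdx {l : W} {u v : V} {k m : ℕ} (hadj : Γ.Adj u v)
    (hf : FrontIdx Γ l v k) (hm : FrontIdx Γ (l.eraseIdx k) u m) :
    ∃ m', FrontIdx Γ l u m' := by
  have hlen : (l.eraseIdx k).length = l.length - 1 := by
    simp [List.length_eraseIdx, hf.lt]
  have hkl := hf.lt
  have hml := hm.lt
  rcases Nat.lt_or_ge m k with h | h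
  · refine ⟨m, by omega, ?_, ?_⟩
    · rw [← getElem_eraseIdx_lt hm.lt h]; exact hm.fst
    · intro j hj
      have := hm.adj j hj
      rwa [getElem_eraseIdx_lt _ (by omega)] at this
  · refine ⟨m + 1, by omega, ?_, ?_⟩
    · rw [← getElem_eraseIdx_ge hm.lt h]; exact hm.fst
    · intro j hj
      rcases Nat.lt_trichotomy j k with hjk | hjk | hjk
      · have := hm.adj j (by omega)
        rwa [getElem_eraseIdx_lt _ hjk] at this
      · subst hjk
        rw [hf.fst]
        exact hadj
      · have := hm.adj (j-1) (by omega)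
        rwa [getElem_eraseIdx_ge _ (by omega),
          getElem_idx_congr (show j - 1 + 1 = j by omega)] at this

/-- Erasing a front occurrence preserves reducedness. -/
lemma red_eraseIdx {l : W} {v k} (hred : Red Γ G l) (hf : FrontIdx Γ l v k) :
    Red Γ G (l.eraseIdx k) := by
  have hlen : (l.eraseIdx k).length = l.length - 1 := by
    simp [List.length_eraseIdx, hf.lt]
  have hkl := hf.lt
  refine ⟨fun s hs => hred.1 s (List.mem_of_mem_eraseIdx hs), ?_⟩
  intro i j hi hj hij hfst
  have keyf : ∀ (a : ℕ) (ha : a < (l.eraseIdx k).length) (b : ℕ) (hb : b < l.length),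
      (a < k → a = b) → (k ≤ a → a + 1 = b) → ((l.eraseIdx k)[a]'ha).1 = (l[b]'hb).1 := by
    intro a ha b hb h1 h2
    rcases Nat.lt_or_ge a k with h | h
    · rw [getElem_eraseIdx_lt _ h]
      exact congrArg Sigma.fst (getElem_idx_congr (h1 h))
    · rw [getElem_eraseIdx_ge _ h]
      exact congrArg Sigma.fst (getElem_idx_congr (h2 h))
  -- translated indices
  set i' := if i < k then i else i + 1 with hi'def
  set j' := if j < k then j else j + 1 with hj'def
  have hi'c : (i < k ∧ i' = i) ∨ (k ≤ i ∧ i' = i + 1) := by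
    rw [hi'def]
    rcases Nat.lt_or_ge i k with h | h
    exacts [Or.inl ⟨h, if_pos h⟩, Or.inr ⟨h, if_neg (by omega)⟩]
  have hj'c : (j < k ∧ j' = j) ∨ (k ≤ j ∧ j' = j + 1) := by
    rw [hj'def]
    rcases Nat.lt_or_ge j k with h | h
    exacts [Or.inl ⟨h, if_pos h⟩, Or.inr ⟨h, if_neg (by omega)⟩]
  have hii : i' < l.length := by omega
  have hjj : j' < l.length := by omega
  have hij' : i' < j' := by omega
  have hkeyi : ((l.eraseIdx k)[i]'hi).1 = (l[i']'hii).1 :=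
    keyf i hi i' hii (fun h => by omega) (fun h => by omega)
  have hkeyj : ((l.eraseIdx k)[j]'hj).1 = (l[j']'hjj).1 :=
    keyf j hj j' hjj (fun h => by omega) (fun h => by omega)
  obtain ⟨p, hp, h3, h4, h5⟩ := hred.2 i' j' hii hjj hij'
    (hkeyi.symm.trans (hfst.trans hkeyj))
  have hpk : p ≠ k := by
    intro h
    subst h
    have hadj2 := hf.adj i' h3
    rw [hf.fst] at h5
    exact h5 hadj2.symm
  set p' := if p < k then p else p - 1 with hp'def
  have hp'c : (p < k ∧ p' = p) ∨ (k ≤ p ∧ p' = p - 1) := by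
    rw [hp'def]
    rcases Nat.lt_or_ge p k with h | h
    exacts [Or.inl ⟨h, if_pos h⟩, Or.inr ⟨h, if_neg (by omega)⟩]
  have hpp : p' < (l.eraseIdx k).length := by omega
  refine ⟨p', hpp, by omega, by omega, ?_⟩
  have hkeyp : ((l.eraseIdx k)[p']'hpp).1 = (l[p]'hp).1 :=
    keyf p' hpp p hp (fun h => by omega) (fun h => by omega)
  rw [hkeyi, hkeyp]
  exact h5


lemma map_fst_set {l : W} {k : ℕ} (hk : k < l.length) {v : V} (x : G v)
    (hfst : (l[k]'hk).1 = v) :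
    (l.set k ⟨v, x⟩).map Sigma.fst = l.map Sigma.fst := by
  apply List.ext_getElem (by simp)
  intro n h1 h2
  simp only [List.getElem_map, List.getElem_set]
  split
  · next h => subst h; exact hfst.symm
  · rfl

lemma frontIdx_set {l : W} {k : ℕ} (hk : k < l.length) {v u : V} (x : G v)
    (hfst : (l[k]'hk).1 = v) {m : ℕ} (h : FrontIdx Γ l u m) :
    FrontIdx Γ (l.set k ⟨v, x⟩) u m :=
  frontIdx_congr_fst (map_fst_set hk x hfst).symm h

lemma frontIdx_set_rev {l : W} {k : ℕ} (hk : k < l.length) {v u : V} (x : G v)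
    (hfst : (l[k]'hk).1 = v) {m : ℕ} (h : FrontIdx Γ (l.set k ⟨v, x⟩) u m) :
    FrontIdx Γ l u m :=
  frontIdx_congr_fst (map_fst_set hk x hfst) h

lemma red_set {l : W} {k : ℕ} (hk : k < l.length) {v : V} {x : G v} (hx : x ≠ 1)
    (hfst : (l[k]'hk).1 = v) (hred : Red Γ G l) : Red Γ G (l.set k ⟨v, x⟩) := by
  apply red_congr_fst (map_fst_set hk x hfst).symm _ hred
  intro s hs
  rcases List.mem_or_eq_of_mem_set hs with h | h
  · exact hred.1 s h
  · subst h; exact hx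

lemma no_frontIdx_of_red_cons {s : Σ u, G u} {l : W} (hred : Red Γ G (s :: l)) :
    ¬ ∃ k, FrontIdx Γ l s.1 k := by
  rintro ⟨k, hk⟩
  have hkl := hk.lt
  have h1 : ((s :: l)[0]'(by simp)).1 = ((s :: l)[k+1]'(by simp; omega)).1 := by
    simpa using hk.fst.symm
  obtain ⟨m, hm, h3, h4, h5⟩ := hred.2 0 (k+1) (by simp) (by simp; omega) (by omega) h1
  obtain ⟨m', rfl⟩ : ∃ m', m = m' + 1 := ⟨m - 1, by omega⟩
  apply h5
  have := hk.adj m' (by omega)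
  simpa using this

lemma red_cons {l : W} {v : V} {g : G v} (hg : g ≠ 1)
    (hnone : ¬ ∃ k, FrontIdx Γ l v k) (hred : Red Γ G l) :
    Red Γ G ((⟨v, g⟩ : Σ u, G u) :: l) := by
  constructor
  · intro s hs
    rcases List.mem_cons.1 hs with h | h
    · subst h; exact hg
    · exact hred.1 s h
  · intro i j hi hj hij hfst
    match i, j with
    | i + 1, j + 1 =>
      obtain ⟨p, hp, h3, h4, h5⟩ := hred.2 i j (by simpa using hi) (by simpa using hj)
        (by omega) (by simpa using hfst)
      exact ⟨p + 1, by simpa using hp, by omega, by omega, by simpa using h5⟩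
    | 0, j + 1 =>
      -- the (j+1)-st syllable has vertex v; find a non-adjacent syllable before it
      simp only [List.getElem_cons_zero, List.getElem_cons_succ] at hfst
      by_contra hcon
      push_neg at hcon
      apply hnone
      have hjl : j < l.length := by simpa using hj
      refine ⟨j, hjl, hfst.symm, ?_⟩
      intro m hm
      have := hcon (m+1) (by simp; omega) (by omega) (by omega)
      simpa using this

/-! ### Left multiplication on reduced words -/

open scoped Classical in
noncomputable def mergeAt (v : V) (g : G v) (l : W) (k : ℕ) (hk : k < l.length)
    (hfst : (l[k]'hk).1 = v) : W :=
  if g * (hfst ▸ (l[k]'hk).2) = 1 then l.eraseIdx k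
  else l.set k ⟨v, g * (hfst ▸ (l[k]'hk).2)⟩

variable (Γ) in
open scoped Classical in
noncomputable def leftmul (v : V) (g : G v) (l : W) : W :=
  if hg : g = 1 then l
  else if h : ∃ k, FrontIdx Γ l v k then
    mergeAt v g l h.choose h.choose_spec.lt h.choose_spec.fst
  else ⟨v, g⟩ :: l

lemma mergeAt_congr {v : V} {g : G v} {l : W} {k k' : ℕ} (h : k = k')
    (hk : k < l.length) (hfst : (l[k]'hk).1 = v) (hk' : k' < l.length)
    (hfst' : (l[k']'hk').1 = v) :
    mergeAt v g l k hk hfst = mergeAt v g l k' hk' hfst' := by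
  subst h; rfl

@[simp] lemma leftmul_one {v : V} {l : W} : leftmul Γ v (1 : G v) l = l := by
  simp [leftmul]

lemma leftmul_of_frontIdx {v : V} {g : G v} (hg : g ≠ 1) {l : W} {k : ℕ}
    (hk : FrontIdx Γ l v k) :
    leftmul Γ v g l = mergeAt v g l k hk.lt hk.fst := by
  rw [leftmul, dif_neg hg, dif_pos ⟨k, hk⟩]
  exact mergeAt_congr (frontIdx_unique (Exists.choose_spec ⟨k, hk⟩) hk) _ _ _ _

lemma leftmul_of_no_frontIdx {v : V} {g : G v} (hg : g ≠ 1) {l : W}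
    (h : ¬ ∃ k, FrontIdx Γ l v k) :
    leftmul Γ v g l = ⟨v, g⟩ :: l := by
  rw [leftmul, dif_neg hg, dif_neg h]

lemma leftmul_erase {v : V} {g : G v} (hg : g ≠ 1) {l : W} {k : ℕ}
    (hk : FrontIdx Γ l v k) (h1 : g * (hk.fst ▸ (l[k]'hk.lt).2) = 1) :
    leftmul Γ v g l = l.eraseIdx k := by
  rw [leftmul_of_frontIdx hg hk, mergeAt, if_pos h1]

lemma leftmul_set {v : V} {g : G v} (hg : g ≠ 1) {l : W} {k : ℕ}
    (hk : FrontIdx Γ l v k) (h1 : g * (hk.fst ▸ (l[k]'hk.lt).2) ≠ 1) :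
    leftmul Γ v g l = l.set k ⟨v, g * (hk.fst ▸ (l[k]'hk.lt).2)⟩ := by
  rw [leftmul_of_frontIdx hg hk, mergeAt, if_neg h1]

/-- `leftmul` preserves reducedness. -/
lemma red_leftmul {v : V} (g : G v) {l : W} (hred : Red Γ G l) :
    Red Γ G (leftmul Γ v g l) := by
  by_cases hg : g = 1
  · simpa [hg]
  by_cases h : ∃ k, FrontIdx Γ l v k
  · obtain ⟨k, hk⟩ := h
    by_cases h1 : g * (hk.fst ▸ (l[k]'hk.lt).2) = 1
    · rw [leftmul_erase hg hk h1]
      exact red_eraseIdx hred hk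
    · rw [leftmul_set hg hk h1]
      exact red_set hk.lt h1 hk.fst hred
  · rw [leftmul_of_no_frontIdx hg h]
    exact red_cons hg h hred

lemma leftmul_cons_of_red {s : Σ u, G u} {l : W} (hred : Red Γ G (s :: l)) :
    leftmul Γ s.1 s.2 l = s :: l := by
  have hg : s.2 ≠ 1 := hred.1 s (by simp)
  rw [leftmul_of_no_frontIdx hg (no_frontIdx_of_red_cons hred)]



/-! ### Shuffle equivalence -/

variable (Γ G) in
def Shuf : W → W → Prop := Relation.EqvGen (AdjSwap Γ G)

lemma shuf_refl (l : W) : Shuf Γ G l l := Relation.EqvGen.refl l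

lemma shuf_symm {l l' : W} (h : Shuf Γ G l l') : Shuf Γ G l' l := h.symm _ _

lemma shuf_trans {a b c : W} (h : Shuf Γ G a b) (h' : Shuf Γ G b c) : Shuf Γ G a c :=
  h.trans _ _ _ h'

lemma shuf_of_adjSwap {l l' : W} (h : AdjSwap Γ G l l') : Shuf Γ G l l' :=
  Relation.EqvGen.rel _ _ h

lemma adjSwap_symm {l l' : W} (h : AdjSwap Γ G l l') : AdjSwap Γ G l' l := by
  obtain ⟨w₁, w₂, s, t, adj, h1, h2⟩ := h
  exact ⟨w₁, w₂, t, s, adj.symm, h2, h1⟩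

lemma adjSwap_length {l l' : W} (h : AdjSwap Γ G l l') : l.length = l'.length := by
  obtain ⟨w₁, w₂, s, t, adj, rfl, rfl⟩ := h
  simp

lemma shuf_length {l l' : W} (h : Shuf Γ G l l') : l.length = l'.length := by
  induction h with
  | rel _ _ h => exact adjSwap_length h
  | refl => rfl
  | symm _ _ _ ih => omega
  | trans _ _ _ _ _ ih1 ih2 => omega

lemma shuf_wordProd {l l' : W} (h : Shuf Γ G l l') : wordProd Γ G l = wordProd Γ G l' := by
  induction h with
  | rel _ _ h => exact wordProd_adjSwap h
  | refl => rfl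
  | symm _ _ _ ih => exact ih.symm
  | trans _ _ _ _ _ ih1 ih2 => exact ih1.trans ih2

lemma shuf_cons {a b : W} (t : Σ u, G u) (h : Shuf Γ G a b) : Shuf Γ G (t :: a) (t :: b) := by
  induction h with
  | rel x y h =>
    obtain ⟨w₁, w₂, s', t', adj, rfl, rfl⟩ := h
    exact shuf_of_adjSwap ⟨t :: w₁, w₂, s', t', adj, rfl, rfl⟩
  | refl => exact shuf_refl _
  | symm _ _ _ ih => exact shuf_symm ih
  | trans _ _ _ _ _ ih1 ih2 => exact shuf_trans ih1 ih2

/-- A syllable adjacent to everything in `w₁` can be moved from the front past `w₁`. -/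
lemma shuf_cons_middle (s : Σ u, G u) (w₁ w₂ : W) (h : ∀ t ∈ w₁, Γ.Adj s.1 t.1) :
    Shuf Γ G (s :: (w₁ ++ w₂)) (w₁ ++ s :: w₂) := by
  induction w₁ with
  | nil => exact shuf_refl _
  | cons t w₁ ih =>
    refine shuf_trans (shuf_of_adjSwap ⟨[], w₁ ++ w₂, s, t, h t (by simp), rfl, rfl⟩) ?_
    exact shuf_cons t (ih (fun x hx => h x (by simp [hx])))

/-! ### getElem descriptions of middle decompositions -/

lemma len_mid (w₁ w₂ : W) (s t : Σ u, G u) :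
    (w₁ ++ s :: t :: w₂).length = w₁.length + w₂.length + 2 := by
  simp; omega

lemma mid_get_left (w₁ w₂ : W) (s t : Σ u, G u) {i : ℕ} (hi : i < w₁.length) :
    (w₁ ++ s :: t :: w₂)[i]'(by rw [len_mid]; omega) = w₁[i]'hi :=
  List.getElem_append_left hi

lemma mid_get_m (w₁ w₂ : W) (s t : Σ u, G u) :
    (w₁ ++ s :: t :: w₂)[w₁.length]'(by rw [len_mid]; omega) = s := by
  rw [List.getElem_append_right (le_refl _)]
  simp

lemma mid_get_m1 (w₁ w₂ : W) (s t : Σ u, G u) :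
    (w₁ ++ s :: t :: w₂)[w₁.length + 1]'(by rw [len_mid]; omega) = t := by
  rw [List.getElem_append_right (by omega)]
  have : w₁.length + 1 - w₁.length = 1 := by omega
  simp [this]

lemma mid_get_right (w₁ w₂ : W) (s t : Σ u, G u) {i : ℕ}
    (hi : w₁.length + 2 ≤ i) (hi2 : i < (w₁ ++ s :: t :: w₂).length) :
    (w₁ ++ s :: t :: w₂)[i]'hi2 = w₂[i - w₁.length - 2]'(by rw [len_mid] at hi2; omega) := by
  rw [List.getElem_append_right (by omega)]
  obtain ⟨d, hd⟩ : ∃ d, i - w₁.length = d + 2 := ⟨i - w₁.length - 2, by omega⟩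
  rw [getElem_idx_congr hd]
  have : d = i - w₁.length - 2 := by omega
  simp [this]

/-- Index-level description of an adjacent swap. -/
lemma adjSwap_index {l l' : W} (h : AdjSwap Γ G l l') :
    ∃ m, ∃ (hm : m + 1 < l.length) (hlen : l'.length = l.length),
      Γ.Adj (l[m]'(by omega)).1 (l[m+1]'hm).1 ∧
      l'[m]'(by omega) = l[m+1]'hm ∧ l'[m+1]'(by omega) = l[m]'(by omega) ∧
      ∀ i (hi : i < l.length), i ≠ m → i ≠ m+1 → l'[i]'(by omega) = l[i]'hi := by
  obtain ⟨w₁, w₂, s, t, adj, rfl, rfl⟩ := h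
  refine ⟨w₁.length, by rw [len_mid]; omega, by rw [len_mid, len_mid], ?_, ?_, ?_, ?_⟩
  · rw [mid_get_m, mid_get_m1]; exact adj
  · rw [mid_get_m, mid_get_m1]
  · rw [mid_get_m, mid_get_m1]
  · intro i hi h1 h2
    rcases Nat.lt_or_ge i w₁.length with h3 | h3
    · rw [mid_get_left _ _ _ _ h3, mid_get_left _ _ _ _ h3]
    · have h4 : w₁.length + 2 ≤ i := by omega
      rw [mid_get_right _ _ _ _ h4, mid_get_right _ _ _ _ h4]

lemma mid_get_m' (w₁ w₂ : W) (s t : Σ u, G u) {i : ℕ} (hi : i = w₁.length)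
    (h2 : i < (w₁ ++ s :: t :: w₂).length) :
    (w₁ ++ s :: t :: w₂)[i]'h2 = s := by
  subst hi; exact mid_get_m w₁ w₂ s t

lemma mid_get_m1' (w₁ w₂ : W) (s t : Σ u, G u) {i : ℕ} (hi : i = w₁.length + 1)
    (h2 : i < (w₁ ++ s :: t :: w₂).length) :
    (w₁ ++ s :: t :: w₂)[i]'h2 = t := by
  subst hi; exact mid_get_m1 w₁ w₂ s t

/-- Construct an adjacent swap from index-level data. -/
lemma adjSwap_of_index {l l' : W} (m : ℕ) (hm : m + 1 < l.length)
    (hlen : l'.length = l.length)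
    (hadj : Γ.Adj (l[m]'(by omega)).1 (l[m+1]'hm).1)
    (h1 : l'[m]'(by omega) = l[m+1]'hm) (h2 : l'[m+1]'(by omega) = l[m]'(by omega))
    (h3 : ∀ i (hi : i < l.length), i ≠ m → i ≠ m+1 → l'[i]'(by omega) = l[i]'hi) :
    AdjSwap Γ G l l' := by
  have hw : (l.take m).length = m := by rw [List.length_take]; omega
  refine ⟨l.take m, l.drop (m+2), l[m]'(by omega), l[m+1]'hm, hadj, ?_, ?_⟩
  · conv_lhs => rw [← List.take_append_drop m l]
    congr 1
    rw [List.drop_eq_getElem_cons (show m < l.length by omega)]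
    congr 1
    rw [List.drop_eq_getElem_cons hm]
  · apply List.ext_getElem
    · simp only [hlen, len_mid, hw, List.length_drop]; omega
    · intro n hn1 hn2
      rcases Nat.lt_or_ge n m with h4 | h4
      · rw [mid_get_left _ _ _ _ (show n < (l.take m).length by rw [hw]; exact h4)]
        rw [List.getElem_take]
        exact h3 n (by omega) (by omega) (by omega)
      rcases Nat.eq_or_lt_of_le h4 with h5 | h5
      · rw [mid_get_m' _ _ _ _ (by rw [hw]; omega)]
        rw [getElem_idx_congr (show n = m by omega)]
        exact h1
      rcases Nat.eq_or_lt_of_le (h5 : m + 1 ≤ n) with h6 | h6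
      · rw [mid_get_m1' _ _ _ _ (by rw [hw]; omega)]
        rw [getElem_idx_congr (show n = m + 1 by omega)]
        exact h2
      · rw [mid_get_right _ _ _ _ (by rw [hw]; omega)]
        rw [List.getElem_drop]
        rw [h3 n (by omega) (by omega) (by omega)]
        exact getElem_idx_congr (by rw [hw]; omega)



lemma adjSwap_mem {l l' : W} (h : AdjSwap Γ G l l') {x : Σ u, G u} (hx : x ∈ l') : x ∈ l := by
  obtain ⟨w₁, w₂, s, t, adj, rfl, rfl⟩ := h
  simp at hx ⊢
  tauto

/-- An adjacent swap preserves reducedness. -/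
lemma red_adjSwap {l l' : W} (h : AdjSwap Γ G l l') (hred : Red Γ G l) : Red Γ G l' := by
  obtain ⟨m, hm, hlen, hadj, e1, e2, e3⟩ := adjSwap_index h
  refine ⟨fun s hs => hred.1 s (adjSwap_mem h hs), ?_⟩
  intro i j hi hj hij hfst
  have keyf : ∀ (a b : ℕ) (hb : b < l.length)
      (_ : (a = m ∧ b = m+1) ∨ (a = m+1 ∧ b = m) ∨ (a ≠ m ∧ a ≠ m+1 ∧ a = b))
      (ha : a < l'.length), (l'[a]'ha).1 = (l[b]'hb).1 := by
    intro a b hb hcase ha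
    rcases hcase with ⟨rfl, rfl⟩ | ⟨rfl, rfl⟩ | ⟨h1, h2, rfl⟩
    · exact congrArg Sigma.fst e1
    · exact congrArg Sigma.fst e2
    · exact congrArg Sigma.fst (e3 a (by omega) h1 h2)
  by_cases hijm : i = m ∧ j = m + 1
  · exfalso
    obtain ⟨rfl, rfl⟩ := hijm
    exact hadj.ne ((congrArg Sigma.fst e1).symm.trans
      (hfst.trans (congrArg Sigma.fst e2))).symm
  set i' := if i = m then m+1 else if i = m+1 then m else i with hi'def
  set j' := if j = m then m+1 else if j = m+1 then m else j with hj'def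
  have hi'c : (i = m ∧ i' = m+1) ∨ (i = m+1 ∧ i' = m) ∨ (i ≠ m ∧ i ≠ m+1 ∧ i' = i) := by
    rw [hi'def]; split_ifs with a b
    exacts [Or.inl ⟨a, rfl⟩, Or.inr (Or.inl ⟨b, rfl⟩), Or.inr (Or.inr ⟨a, b, rfl⟩)]
  have hj'c : (j = m ∧ j' = m+1) ∨ (j = m+1 ∧ j' = m) ∨ (j ≠ m ∧ j ≠ m+1 ∧ j' = j) := by
    rw [hj'def]; split_ifs with a b
    exacts [Or.inl ⟨a, rfl⟩, Or.inr (Or.inl ⟨b, rfl⟩), Or.inr (Or.inr ⟨a, b, rfl⟩)]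
  have hii : i' < l.length := by omega
  have hjj : j' < l.length := by omega
  have hij' : i' < j' := by omega
  have hfst' : (l[i']'hii).1 = (l[j']'hjj).1 :=
    (keyf i i' hii (by omega) hi).symm.trans (hfst.trans (keyf j j' hjj (by omega) hj))
  obtain ⟨p, hp, h3, h4, h5⟩ := hred.2 i' j' hii hjj hij' hfst'
  by_cases hc1 : p = m ∧ j = m
  · exfalso
    apply h5
    have ej : (l[j']'hjj).1 = (l[m+1]'hm).1 :=
      congrArg Sigma.fst (getElem_idx_congr (by omega))
    have ch : (l[i']'hii).1 = (l[m+1]'hm).1 := hfst'.trans ej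
    have : Γ.Adj (l[i']'hii).1 (l[m]'(by omega)).1 := by
      rw [ch]; exact hadj.symm
    rwa [show (l[p]'hp) = l[m]'(by omega) from getElem_idx_congr (by omega)]
  by_cases hc2 : p = m + 1 ∧ i = m + 1
  · exfalso
    apply h5
    have ei : (l[i']'hii).1 = (l[m]'(by omega)).1 :=
      congrArg Sigma.fst (getElem_idx_congr (by omega))
    have : Γ.Adj (l[i']'hii).1 (l[m+1]'hm).1 := by rw [ei]; exact hadj
    rwa [show (l[p]'hp) = l[m+1]'hm from getElem_idx_congr (by omega)]
  set q := if p = m then m+1 else if p = m+1 then m else p with hqdef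
  have hqc : (p = m ∧ q = m+1) ∨ (p = m+1 ∧ q = m) ∨ (p ≠ m ∧ p ≠ m+1 ∧ q = p) := by
    rw [hqdef]; split_ifs with a b
    exacts [Or.inl ⟨a, rfl⟩, Or.inr (Or.inl ⟨b, rfl⟩), Or.inr (Or.inr ⟨a, b, rfl⟩)]
  have hql : q < l'.length := by omega
  refine ⟨q, hql, by omega, by omega, ?_⟩
  rw [keyf i i' hii (by omega) hi, keyf q p hp (by omega) hql]
  exact h5

lemma red_shuf_iff {l l' : W} (h : Shuf Γ G l l') : Red Γ G l ↔ Red Γ G l' := by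
  induction h with
  | rel a b h => exact ⟨red_adjSwap h, red_adjSwap (adjSwap_symm h)⟩
  | refl => exact Iff.rfl
  | symm _ _ _ ih => exact ih.symm
  | trans _ _ _ _ _ ih1 ih2 => exact ih1.trans ih2

lemma red_shuf {l l' : W} (h : Shuf Γ G l l') (hred : Red Γ G l) : Red Γ G l' :=
  (red_shuf_iff h).1 hred



/-! ### More list helpers -/

lemma cast_snd {s : Σ u, G u} {v : V} (hfst : s.1 = v) {b : G v} (hs : s = ⟨v, b⟩) :
    hfst ▸ s.2 = b := by subst hs; rfl

lemma eraseIdx_set_same (l : W) (k : ℕ) (a : Σ u, G u) :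
    (l.set k a).eraseIdx k = l.eraseIdx k := by
  induction l generalizing k with
  | nil => simp
  | cons b t ih => cases k <;> simp [ih]

lemma set_getElem_self (l : W) {k : ℕ} (hk : k < l.length) :
    l.set k (l[k]'hk) = l := by
  apply List.ext_getElem (by simp)
  intro n h1 h2
  rw [List.getElem_set]
  split
  · next h => subst h; rfl
  · rfl

/-- Moving the front occurrence to the front of the word. -/
lemma shuf_cons_eraseIdx {l : W} {v k} (hk : FrontIdx Γ l v k) :
    Shuf Γ G ((l[k]'hk.lt) :: l.eraseIdx k) l := by
  have hmadj : ∀ t ∈ l.take k, Γ.Adj (l[k]'hk.lt).1 t.1 := by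
    intro t ht
    rw [List.mem_take_iff_getElem] at ht
    obtain ⟨i, hi, rfl⟩ := ht
    rw [hk.fst]
    exact hk.adj i (by omega)
  rw [List.eraseIdx_eq_take_drop_succ]
  have hl : l = l.take k ++ (l[k]'hk.lt) :: l.drop (k+1) := by
    conv_lhs => rw [← List.take_append_drop k l]
    congr 1
    rw [List.drop_eq_getElem_cons hk.lt]
  conv_rhs => rw [hl]
  exact shuf_cons_middle _ _ _ hmadj

lemma shuf_cons_eraseIdx_set {l : W} {v k} (hk : FrontIdx Γ l v k) (x : G v) :
    Shuf Γ G ((⟨v, x⟩ : Σ u, G u) :: l.eraseIdx k) (l.set k ⟨v, x⟩) := by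
  have hmadj : ∀ t ∈ l.take k, Γ.Adj (⟨v, x⟩ : Σ u, G u).1 t.1 := by
    intro t ht
    rw [List.mem_take_iff_getElem] at ht
    obtain ⟨i, hi, rfl⟩ := ht
    exact hk.adj i (by omega)
  rw [List.eraseIdx_eq_take_drop_succ,
    List.set_eq_take_append_cons_drop, if_pos hk.lt]
  exact shuf_cons_middle _ _ _ hmadj

/-- Multiplicativity of `leftmul` up to shuffles. -/
lemma leftmul_mul {v : V} (g h : G v) {l : W} (hred : Red Γ G l) :
    Shuf Γ G (leftmul Γ v g (leftmul Γ v h l)) (leftmul Γ v (g * h) l) := by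
  by_cases hh : h = 1
  · subst hh; rw [leftmul_one, mul_one]; exact shuf_refl _
  by_cases hg : g = 1
  · subst hg; rw [leftmul_one, one_mul]; exact shuf_refl _
  by_cases hex : ∃ k, FrontIdx Γ l v k
  · obtain ⟨k, hk⟩ := hex
    have hs2 : (⟨v, hk.fst ▸ (l[k]'hk.lt).2⟩ : Σ u, G u) = l[k]'hk.lt := sigma_eta _ hk.fst
    set s2 : G v := hk.fst ▸ (l[k]'hk.lt).2 with hs2def
    have hs2ne : s2 ≠ 1 := by
      intro hcon
      apply hred.1 (l[k]'hk.lt) (List.getElem_mem _)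
      rw [← hs2, hcon]
    by_cases h1 : h * s2 = 1
    · rw [leftmul_erase hh hk h1]
      have hnone := no_frontIdx_eraseIdx hred hk
      rw [leftmul_of_no_frontIdx hg hnone]
      by_cases hgh : g * h = 1
      · rw [hgh, leftmul_one]
        have hgs : g = s2 := by
          have e1 : s2 = h⁻¹ := by rw [← one_mul s2, ← inv_mul_cancel h, mul_assoc, h1, mul_one]
          have e2 : g = h⁻¹ := by rw [← one_mul h⁻¹, ← hgh, mul_assoc, mul_inv_cancel, mul_one]
          rw [e1, e2]
        rw [hgs, hs2]
        exact shuf_cons_eraseIdx hk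
      · rw [leftmul_set hgh hk (show (g * h) * s2 ≠ 1 by rw [mul_assoc, h1, mul_one]; exact hg)]
        have e : (g * h) * s2 = g := by rw [mul_assoc, h1, mul_one]
        rw [e]
        exact shuf_cons_eraseIdx_set hk g
    · rw [leftmul_set hh hk h1]
      set l₁ := l.set k ⟨v, h * s2⟩ with hl₁
      have hk1 : FrontIdx Γ l₁ v k := frontIdx_set hk.lt _ hk.fst hk
      have hget1 : l₁[k]'hk1.lt = ⟨v, h * s2⟩ := List.getElem_set_self _
      have hcast : hk1.fst ▸ (l₁[k]'hk1.lt).2 = h * s2 := cast_snd _ hget1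
      by_cases h2 : g * (h * s2) = 1
      · have hgh : g * h ≠ 1 := by
          intro hcon
          have e : g * (h * s2) = s2 := by rw [← mul_assoc, hcon, one_mul]
          exact hs2ne (e.symm.trans h2)
        rw [leftmul_erase hg hk1 (by rw [hcast]; exact h2),
          leftmul_erase hgh hk (by rw [mul_assoc]; exact h2), hl₁, eraseIdx_set_same]
        exact shuf_refl _
      · rw [leftmul_set hg hk1 (by rw [hcast]; exact h2), hcast, hl₁, List.set_set]
        by_cases hgh : g * h = 1
        · have e : g * (h * s2) = s2 := by rw [← mul_assoc, hgh, one_mul]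
          rw [hgh, leftmul_one, e, hs2, set_getElem_self]
          exact shuf_refl _
        · rw [leftmul_set hgh hk (by rw [mul_assoc]; exact h2), mul_assoc]
          exact shuf_refl _
  · rw [leftmul_of_no_frontIdx hh hex]
    have h0 : FrontIdx Γ ((⟨v, h⟩ : Σ u, G u) :: l) v 0 := frontIdx_cons_zero rfl
    have hcast : h0.fst ▸ (((⟨v, h⟩ : Σ u, G u) :: l)[0]'h0.lt).2 = h :=
      cast_snd h0.fst (by simp)
    by_cases hgh : g * h = 1
    · rw [leftmul_erase hg h0 (by rw [hcast]; exact hgh), hgh, leftmul_one]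
      exact shuf_refl _
    · rw [leftmul_set hg h0 (by rw [hcast]; exact hgh), leftmul_of_no_frontIdx hgh hex]
      rw [hcast]
      exact shuf_refl _



lemma cast_snd_congr {s s' : Σ u, G u} (h : s = s') {v : V} (h1 : s.1 = v) (h2 : s'.1 = v) :
    h1 ▸ s.2 = h2 ▸ s'.2 := by subst h; rfl

lemma set_eraseIdx_lt (l : W) {p q : ℕ} (h : p < q) (a : Σ u, G u) :
    (l.set p a).eraseIdx q = (l.eraseIdx q).set p a := by
  induction l generalizing p q with
  | nil => simp
  | cons b t ih =>
    obtain ⟨q', rfl⟩ : ∃ q', q = q' + 1 := ⟨q - 1, by omega⟩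
    cases p with
    | zero => simp
    | succ p' => simp [ih (show p' < q' by omega)]

lemma set_eraseIdx_gt (l : W) {p q : ℕ} (h : p < q) (b : Σ u, G u) :
    (l.set q b).eraseIdx p = (l.eraseIdx p).set (q - 1) b := by
  induction l generalizing p q with
  | nil => simp
  | cons a t ih =>
    obtain ⟨q', rfl⟩ : ∃ q', q = q' + 1 := ⟨q - 1, by omega⟩
    cases p with
    | zero => simp
    | succ p' =>
      obtain ⟨q'', rfl⟩ : ∃ q'', q' = q'' + 1 := ⟨q' - 1, by omega⟩
      simp only [List.set_cons_succ, List.eraseIdx_cons_succ, Nat.add_sub_cancel]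
      rw [ih (show p' < q'' + 1 by omega)]
      simp

lemma eraseIdx_eraseIdx (l : W) {p q : ℕ} (h : p < q) :
    (l.eraseIdx q).eraseIdx p = (l.eraseIdx p).eraseIdx (q - 1) := by
  induction l generalizing p q with
  | nil => simp
  | cons a t ih =>
    obtain ⟨q', rfl⟩ : ∃ q', q = q' + 1 := ⟨q - 1, by omega⟩
    cases p with
    | zero => simp
    | succ p' =>
      obtain ⟨q'', rfl⟩ : ∃ q'', q' = q'' + 1 := ⟨q' - 1, by omega⟩
      simp only [List.eraseIdx_cons_succ, Nat.add_sub_cancel]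
      rw [ih (show p' < q'' + 1 by omega)]
      simp



lemma no_front_cons {s : Σ u, G u} {l : W} {u : V} (h1 : s.1 ≠ u)
    (h2 : ¬ ∃ k, FrontIdx Γ l u k) : ¬ ∃ k, FrontIdx Γ ((s : Σ u, G u) :: l) u k := by
  rw [exists_frontIdx_cons_iff]
  rintro (h | ⟨_, h⟩)
  · exact h1 h
  · exact h2 h

lemma leftmul_comm_aux {u v : V} (hadj : Γ.Adj u v) (g : G u) (h : G v) {l : W}
    (hg : g ≠ 1) (hh : h ≠ 1) (hv : ¬ ∃ k, FrontIdx Γ l v k) :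
    Shuf Γ G (leftmul Γ u g (leftmul Γ v h l)) (leftmul Γ v h (leftmul Γ u g l)) := by
  have huv : u ≠ v := hadj.ne
  rw [leftmul_of_no_frontIdx hh hv]
  by_cases hu : ∃ k, FrontIdx Γ l u k
  · obtain ⟨k, hk⟩ := hu
    have hk1 : FrontIdx Γ ((⟨v,h⟩ : Σ u, G u) :: l) u (k+1) := frontIdx_cons_succ hadj hk
    have hget : ((⟨v,h⟩ : Σ u, G u) :: l)[k+1]'hk1.lt = l[k]'hk.lt := by simp
    have hcast : hk1.fst ▸ (((⟨v,h⟩ : Σ u, G u) :: l)[k+1]'hk1.lt).2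
        = hk.fst ▸ (l[k]'hk.lt).2 := cast_snd_congr hget _ _
    by_cases h1 : g * (hk.fst ▸ (l[k]'hk.lt).2) = 1
    · rw [leftmul_erase hg hk1 (by rw [hcast]; exact h1), leftmul_erase hg hk h1,
        List.eraseIdx_cons_succ,
        leftmul_of_no_frontIdx hh
          (fun ⟨m, hm⟩ => hv (exists_frontIdx_of_eraseIdx hadj.symm hk hm))]
      exact shuf_refl _
    · rw [leftmul_set hg hk1 (by rw [hcast]; exact h1), leftmul_set hg hk h1]
      rw [hcast, List.set_cons_succ,
        leftmul_of_no_frontIdx hh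
          (fun ⟨m, hm⟩ => hv ⟨m, frontIdx_set_rev hk.lt _ hk.fst hm⟩)]
      exact shuf_refl _
  · rw [leftmul_of_no_frontIdx hg hu,
      leftmul_of_no_frontIdx hg (no_front_cons (fun e => huv e.symm) hu),
      leftmul_of_no_frontIdx hh (no_front_cons huv hv)]
    exact shuf_of_adjSwap ⟨[], l, ⟨u,g⟩, ⟨v,h⟩, hadj, rfl, rfl⟩

lemma leftmul_comm_aux2 {u v : V} (hadj : Γ.Adj u v) (g : G u) (h : G v) {l : W}
    (hg : g ≠ 1) (hh : h ≠ 1) {p q : ℕ} (hp : FrontIdx Γ l u p) (hq : FrontIdx Γ l v q)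
    (hpq : p < q) :
    Shuf Γ G (leftmul Γ u g (leftmul Γ v h l)) (leftmul Γ v h (leftmul Γ u g l)) := by
  have hql := hq.lt
  have hpl := hp.lt
  by_cases h1 : h * (hq.fst ▸ (l[q]'hq.lt).2) = 1
  · -- v erases at q
    rw [leftmul_erase hh hq h1]
    have hp' : FrontIdx Γ (l.eraseIdx q) u p := by
      have := frontIdx_eraseIdx_of_adj hadj hq hp
      rwa [if_pos hpq] at this
    have hgetp : (l.eraseIdx q)[p]'hp'.lt = l[p]'hp.lt := getElem_eraseIdx_lt _ hpq
    have hcastp : hp'.fst ▸ ((l.eraseIdx q)[p]'hp'.lt).2 = hp.fst ▸ (l[p]'hp.lt).2 :=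
      cast_snd_congr hgetp _ _
    by_cases h2 : g * (hp.fst ▸ (l[p]'hp.lt).2) = 1
    · -- u erases at p
      rw [leftmul_erase hg hp' (by rw [hcastp]; exact h2), leftmul_erase hg hp h2]
      have hq' : FrontIdx Γ (l.eraseIdx p) v (q-1) := by
        have := frontIdx_eraseIdx_of_adj hadj.symm hp hq
        rwa [if_neg (by omega)] at this
      have hgetq : (l.eraseIdx p)[q-1]'hq'.lt = l[q]'hq.lt := by
        rw [getElem_eraseIdx_ge _ (by omega), getElem_idx_congr (show q - 1 + 1 = q by omega)]
      have hcastq : hq'.fst ▸ ((l.eraseIdx p)[q-1]'hq'.lt).2 = hq.fst ▸ (l[q]'hq.lt).2 :=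
        cast_snd_congr hgetq _ _
      rw [leftmul_erase hh hq' (by rw [hcastq]; exact h1), eraseIdx_eraseIdx _ hpq]
      exact shuf_refl _
    · -- u sets at p
      rw [leftmul_set hg hp' (by rw [hcastp]; exact h2), leftmul_set hg hp h2, hcastp]
      have hq' : FrontIdx Γ (l.set p ⟨u, g * (hp.fst ▸ (l[p]'hp.lt).2)⟩) v q :=
        frontIdx_set hp.lt _ hp.fst hq
      have hgetq : (l.set p ⟨u, g * (hp.fst ▸ (l[p]'hp.lt).2)⟩)[q]'hq'.lt = l[q]'hq.lt :=
        List.getElem_set_ne (show p ≠ q by omega) _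
      have hcastq : hq'.fst ▸ ((l.set p _)[q]'hq'.lt).2 = hq.fst ▸ (l[q]'hq.lt).2 :=
        cast_snd_congr hgetq _ _
      rw [leftmul_erase hh hq' (by rw [hcastq]; exact h1), set_eraseIdx_lt _ hpq]
      exact shuf_refl _
  · -- v sets at q
    rw [leftmul_set hh hq h1]
    have hp' : FrontIdx Γ (l.set q ⟨v, h * (hq.fst ▸ (l[q]'hq.lt).2)⟩) u p :=
      frontIdx_set hq.lt _ hq.fst hp
    have hgetp : (l.set q ⟨v, h * (hq.fst ▸ (l[q]'hq.lt).2)⟩)[p]'hp'.lt = l[p]'hp.lt :=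
      List.getElem_set_ne (show q ≠ p by omega) _
    have hcastp : hp'.fst ▸ ((l.set q _)[p]'hp'.lt).2 = hp.fst ▸ (l[p]'hp.lt).2 :=
      cast_snd_congr hgetp _ _
    by_cases h2 : g * (hp.fst ▸ (l[p]'hp.lt).2) = 1
    · -- u erases at p
      rw [leftmul_erase hg hp' (by rw [hcastp]; exact h2), leftmul_erase hg hp h2]
      have hq' : FrontIdx Γ (l.eraseIdx p) v (q-1) := by
        have := frontIdx_eraseIdx_of_adj hadj.symm hp hq
        rwa [if_neg (by omega)] at this
      have hgetq : (l.eraseIdx p)[q-1]'hq'.lt = l[q]'hq.lt := by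
        rw [getElem_eraseIdx_ge _ (by omega), getElem_idx_congr (show q - 1 + 1 = q by omega)]
      have hcastq : hq'.fst ▸ ((l.eraseIdx p)[q-1]'hq'.lt).2 = hq.fst ▸ (l[q]'hq.lt).2 :=
        cast_snd_congr hgetq _ _
      rw [leftmul_set hh hq' (by rw [hcastq]; exact h1), hcastq, set_eraseIdx_gt _ hpq]
      exact shuf_refl _
    · -- u sets at p
      rw [leftmul_set hg hp' (by rw [hcastp]; exact h2), hcastp, leftmul_set hg hp h2]
      have hq' : FrontIdx Γ (l.set p ⟨u, g * (hp.fst ▸ (l[p]'hp.lt).2)⟩) v q :=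
        frontIdx_set hp.lt _ hp.fst hq
      have hgetq : (l.set p ⟨u, g * (hp.fst ▸ (l[p]'hp.lt).2)⟩)[q]'hq'.lt = l[q]'hq.lt :=
        List.getElem_set_ne (show p ≠ q by omega) _
      have hcastq : hq'.fst ▸ ((l.set p _)[q]'hq'.lt).2 = hq.fst ▸ (l[q]'hq.lt).2 :=
        cast_snd_congr hgetq _ _
      rw [leftmul_set hh hq' (by rw [hcastq]; exact h1), hcastq,
        List.set_comm _ _ (by omega : p ≠ q)]
      exact shuf_refl _

/-- Commutation of `leftmul`s at adjacent vertices, up to shuffles. -/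
lemma leftmul_comm {u v : V} (hadj : Γ.Adj u v) (g : G u) (h : G v) {l : W} :
    Shuf Γ G (leftmul Γ u g (leftmul Γ v h l)) (leftmul Γ v h (leftmul Γ u g l)) := by
  by_cases hg : g = 1
  · subst hg; rw [leftmul_one, leftmul_one]; exact shuf_refl _
  by_cases hh : h = 1
  · subst hh; rw [leftmul_one, leftmul_one]; exact shuf_refl _
  by_cases hv : ∃ k, FrontIdx Γ l v k
  · by_cases hu : ∃ k, FrontIdx Γ l u k
    · obtain ⟨p, hp⟩ := hu
      obtain ⟨q, hq⟩ := hv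
      have hpq : p ≠ q := by
        intro e
        subst e
        exact hadj.ne (hp.fst.symm.trans hq.fst)
      rcases Nat.lt_or_ge p q with h' | h'
      · exact leftmul_comm_aux2 hadj g h hg hh hp hq h'
      · exact shuf_symm (leftmul_comm_aux2 hadj.symm h g hh hg hq hp (by omega))
    · exact shuf_symm (leftmul_comm_aux hadj.symm h g hh hg hu)
  · exact leftmul_comm_aux hadj g h hg hh hv



/-! ### erase/set on middle decompositions -/

lemma er_left {w₁ : W} {k : ℕ} (hk : k < w₁.length) (X : W) :
    (w₁ ++ X).eraseIdx k = w₁.eraseIdx k ++ X :=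
  List.eraseIdx_append_of_lt_length hk X

lemma er_m (w₁ w₂ : W) (a b : Σ u, G u) :
    (w₁ ++ a :: b :: w₂).eraseIdx w₁.length = w₁ ++ b :: w₂ := by
  rw [List.eraseIdx_append_of_length_le (le_refl _)]
  simp

lemma er_m1 (w₁ w₂ : W) (a b : Σ u, G u) :
    (w₁ ++ a :: b :: w₂).eraseIdx (w₁.length + 1) = w₁ ++ a :: w₂ := by
  rw [List.eraseIdx_append_of_length_le (by omega)]
  have e : w₁.length + 1 - w₁.length = 1 := by omega
  rw [e]
  simp

lemma er_right (w₁ w₂ : W) (a b : Σ u, G u) {k : ℕ} (hk : w₁.length + 2 ≤ k) :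
    (w₁ ++ a :: b :: w₂).eraseIdx k = w₁ ++ a :: b :: w₂.eraseIdx (k - w₁.length - 2) := by
  rw [List.eraseIdx_append_of_length_le (by omega)]
  obtain ⟨d, hd⟩ : ∃ d, k - w₁.length = d + 2 := ⟨k - w₁.length - 2, by omega⟩
  rw [hd]
  simp

lemma set_left {w₁ : W} {k : ℕ} (hk : k < w₁.length) (X : W) (x : Σ u, G u) :
    (w₁ ++ X).set k x = w₁.set k x ++ X := by
  rw [List.set_append, if_pos hk]

lemma set_m (w₁ w₂ : W) (a b x : Σ u, G u) :
    (w₁ ++ a :: b :: w₂).set w₁.length x = w₁ ++ x :: b :: w₂ := by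
  rw [List.set_append, if_neg (lt_irrefl _)]
  simp

lemma set_m1 (w₁ w₂ : W) (a b x : Σ u, G u) :
    (w₁ ++ a :: b :: w₂).set (w₁.length + 1) x = w₁ ++ a :: x :: w₂ := by
  rw [List.set_append, if_neg (by omega)]
  have e : w₁.length + 1 - w₁.length = 1 := by omega
  rw [e]
  simp

lemma set_right (w₁ w₂ : W) (a b x : Σ u, G u) {k : ℕ} (hk : w₁.length + 2 ≤ k) :
    (w₁ ++ a :: b :: w₂).set k x = w₁ ++ a :: b :: w₂.set (k - w₁.length - 2) x := by
  rw [List.set_append, if_neg (by omega)]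
  obtain ⟨d, hd⟩ : ∃ d, k - w₁.length = d + 2 := ⟨k - w₁.length - 2, by omega⟩
  rw [hd]
  simp

lemma er_m' (w₁ w₂ : W) (a b : Σ u, G u) {i : ℕ} (hi : i = w₁.length) :
    (w₁ ++ a :: b :: w₂).eraseIdx i = w₁ ++ b :: w₂ := by
  subst hi; exact er_m _ _ _ _

lemma er_m1' (w₁ w₂ : W) (a b : Σ u, G u) {i : ℕ} (hi : i = w₁.length + 1) :
    (w₁ ++ a :: b :: w₂).eraseIdx i = w₁ ++ a :: w₂ := by
  subst hi; exact er_m1 _ _ _ _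

lemma set_m' (w₁ w₂ : W) (a b x : Σ u, G u) {i : ℕ} (hi : i = w₁.length) :
    (w₁ ++ a :: b :: w₂).set i x = w₁ ++ x :: b :: w₂ := by
  subst hi; exact set_m _ _ _ _ _

lemma set_m1' (w₁ w₂ : W) (a b x : Σ u, G u) {i : ℕ} (hi : i = w₁.length + 1) :
    (w₁ ++ a :: b :: w₂).set i x = w₁ ++ a :: x :: w₂ := by
  subst hi; exact set_m1 _ _ _ _ _

/-- Transfer of front indices across an adjacent swap. -/
lemma frontIdx_mid_swap {w₁ w₂ : W} {s t : Σ u, G u} (adj : Γ.Adj s.1 t.1) {v : V} {k : ℕ}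
    (hk : FrontIdx Γ (w₁ ++ s :: t :: w₂) v k) :
    FrontIdx Γ (w₁ ++ t :: s :: w₂) v
      (if k = w₁.length then k + 1 else if k = w₁.length + 1 then k - 1 else k) := by
  have hlenA : (w₁ ++ s :: t :: w₂).length = w₁.length + w₂.length + 2 := len_mid _ _ _ _
  have hlenB : (w₁ ++ t :: s :: w₂).length = w₁.length + w₂.length + 2 := len_mid _ _ _ _
  have hkl := hk.lt
  -- all predecessors in A are adjacent to v; translate to B
  rcases Nat.lt_trichotomy k w₁.length with hc | hc | hc
  · rw [if_neg (by omega), if_neg (by omega)]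
    refine ⟨by omega, ?_, ?_⟩
    · rw [mid_get_left _ _ _ _ hc]
      have := hk.fst
      rwa [mid_get_left _ _ _ _ hc] at this
    · intro j hj
      rw [mid_get_left _ _ _ _ (by omega)]
      have := hk.adj j hj
      rwa [mid_get_left _ _ _ _ (by omega)] at this
  · subst hc
    rw [if_pos rfl]
    have hfst : s.1 = v := by
      have := hk.fst
      rwa [mid_get_m] at this
    refine ⟨by omega, ?_, ?_⟩
    · rw [mid_get_m1' _ _ _ _ rfl]
      exact hfst
    · intro j hj
      rcases Nat.lt_trichotomy j w₁.length with h2 | h2 | h2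
      · rw [mid_get_left _ _ _ _ h2]
        have := hk.adj j h2
        rwa [mid_get_left _ _ _ _ h2] at this
      · subst h2
        rw [mid_get_m]
        rw [← hfst]
        exact adj
      · omega
  · rcases Nat.eq_or_lt_of_le hc with hc2 | hc2
    · -- k = m + 1
      rw [if_neg (by omega), if_pos hc2.symm]
      have hfst : t.1 = v := by
        have := hk.fst
        rwa [mid_get_m1' _ _ _ _ hc2.symm] at this
      refine ⟨by omega, ?_, ?_⟩
      · rw [mid_get_m' _ _ _ _ (by omega)]
        exact hfst
      · intro j hj
        have h2 : j < w₁.length := by omega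
        rw [mid_get_left _ _ _ _ h2]
        have := hk.adj j (by omega)
        rwa [mid_get_left _ _ _ _ h2] at this
    · -- k > m + 1
      rw [if_neg (by omega), if_neg (by omega)]
      refine ⟨by omega, ?_, ?_⟩
      · rw [mid_get_right _ _ _ _ (by omega)]
        have := hk.fst
        rwa [mid_get_right _ _ _ _ (by omega)] at this
      · intro j hj
        rcases Nat.lt_trichotomy j w₁.length with h2 | h2 | h2
        · rw [mid_get_left _ _ _ _ h2]
          have := hk.adj j hj
          rwa [mid_get_left _ _ _ _ h2] at this
        · rw [mid_get_m' _ _ _ _ h2]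
          have := hk.adj (w₁.length + 1) (by omega)
          rwa [mid_get_m1' _ _ _ _ rfl] at this
        · rcases Nat.eq_or_lt_of_le (h2 : w₁.length + 1 ≤ j) with h3 | h3
          · rw [mid_get_m1' _ _ _ _ h3.symm]
            have := hk.adj w₁.length (by omega)
            rwa [mid_get_m] at this
          · rw [mid_get_right _ _ _ _ (by omega)]
            have := hk.adj j hj
            rwa [mid_get_right _ _ _ _ (by omega)] at this



/-- `leftmul` is compatible with adjacent swaps, up to shuffle equivalence. -/
lemma leftmul_adjSwap {v : V} (g : G v) {l l' : W} (hsw : AdjSwap Γ G l l') :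
    Shuf Γ G (leftmul Γ v g l) (leftmul Γ v g l') := by
  by_cases hg : g = 1
  · subst hg; rw [leftmul_one, leftmul_one]; exact shuf_of_adjSwap hsw
  obtain ⟨w₁, w₂, s, t, adj, rfl, rfl⟩ := hsw
  by_cases hex : ∃ k, FrontIdx Γ (w₁ ++ s :: t :: w₂) v k
  · obtain ⟨k, hk⟩ := hex
    have hkl := hk.lt
    have hlenA := len_mid w₁ w₂ s t
    rcases Nat.lt_trichotomy k w₁.length with hc | hc | hc
    · -- k inside w₁
      have hkB : FrontIdx Γ (w₁ ++ t :: s :: w₂) v k := by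
        have := frontIdx_mid_swap adj hk
        rwa [if_neg (by omega), if_neg (by omega)] at this
      have hgA : (w₁ ++ s::t::w₂)[k]'hk.lt = w₁[k]'hc := mid_get_left _ _ _ _ hc
      have hgB : (w₁ ++ t::s::w₂)[k]'hkB.lt = w₁[k]'hc := mid_get_left _ _ _ _ hc
      have hcast : hkB.fst ▸ ((w₁++t::s::w₂)[k]'hkB.lt).2
          = hk.fst ▸ ((w₁++s::t::w₂)[k]'hk.lt).2 :=
        cast_snd_congr (hgB.trans hgA.symm) _ _
      by_cases h1 : g * (hk.fst ▸ ((w₁++s::t::w₂)[k]'hk.lt).2) = 1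
      · rw [leftmul_erase hg hk h1, leftmul_erase hg hkB (by rw [hcast]; exact h1),
          er_left hc, er_left hc]
        exact shuf_of_adjSwap ⟨w₁.eraseIdx k, w₂, s, t, adj, rfl, rfl⟩
      · rw [leftmul_set hg hk h1, leftmul_set hg hkB (by rw [hcast]; exact h1), hcast,
          set_left hc, set_left hc]
        exact shuf_of_adjSwap ⟨w₁.set k _, w₂, s, t, adj, rfl, rfl⟩
    · -- k = w₁.length
      have hkB : FrontIdx Γ (w₁ ++ t :: s :: w₂) v (k + 1) := by
        have := frontIdx_mid_swap adj hk
        rwa [if_pos hc] at this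
      have hgA : (w₁ ++ s::t::w₂)[k]'hk.lt = s := mid_get_m' _ _ _ _ hc _
      have hgB : (w₁ ++ t::s::w₂)[k+1]'hkB.lt = s := mid_get_m1' _ _ _ _ (by omega) _
      have hfst : s.1 = v := by
        have := hk.fst; rwa [hgA] at this
      have hcast : hkB.fst ▸ ((w₁++t::s::w₂)[k+1]'hkB.lt).2
          = hk.fst ▸ ((w₁++s::t::w₂)[k]'hk.lt).2 :=
        cast_snd_congr (hgB.trans hgA.symm) _ _
      by_cases h1 : g * (hk.fst ▸ ((w₁++s::t::w₂)[k]'hk.lt).2) = 1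
      · rw [leftmul_erase hg hk h1, leftmul_erase hg hkB (by rw [hcast]; exact h1),
          er_m' _ _ _ _ hc, er_m1' _ _ _ _ (by omega)]
        exact shuf_refl _
      · rw [leftmul_set hg hk h1, leftmul_set hg hkB (by rw [hcast]; exact h1), hcast,
          set_m' _ _ _ _ _ hc, set_m1' _ _ _ _ _ (by omega)]
        exact shuf_of_adjSwap ⟨w₁, w₂, ⟨v, g * (hk.fst ▸ ((w₁++s::t::w₂)[k]'hk.lt).2)⟩, t,
          hfst ▸ adj, rfl, rfl⟩
    · rcases Nat.eq_or_lt_of_le hc with hc2 | hc2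
      · -- k = w₁.length + 1
        have hkB : FrontIdx Γ (w₁ ++ t :: s :: w₂) v (k - 1) := by
          have := frontIdx_mid_swap adj hk
          rwa [if_neg (by omega), if_pos hc2.symm] at this
        have hkb1 : k - 1 = w₁.length := by omega
        have hgA : (w₁ ++ s::t::w₂)[k]'hk.lt = t := mid_get_m1' _ _ _ _ hc2.symm _
        have hgB : (w₁ ++ t::s::w₂)[k-1]'hkB.lt = t := mid_get_m' _ _ _ _ hkb1 _
        have hfst : t.1 = v := by
          have := hk.fst; rwa [hgA] at this
        have hcast : hkB.fst ▸ ((w₁++t::s::w₂)[k-1]'hkB.lt).2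
            = hk.fst ▸ ((w₁++s::t::w₂)[k]'hk.lt).2 :=
          cast_snd_congr (hgB.trans hgA.symm) _ _
        by_cases h1 : g * (hk.fst ▸ ((w₁++s::t::w₂)[k]'hk.lt).2) = 1
        · rw [leftmul_erase hg hk h1, leftmul_erase hg hkB (by rw [hcast]; exact h1)]
          rw [er_m1' _ _ _ _ hc2.symm, er_m' _ _ _ _ hkb1]
          exact shuf_refl _
        · rw [leftmul_set hg hk h1, leftmul_set hg hkB (by rw [hcast]; exact h1), hcast]
          rw [set_m1' _ _ _ _ _ hc2.symm, set_m' _ _ _ _ _ hkb1]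
          exact shuf_of_adjSwap ⟨w₁, w₂, s,
            ⟨v, g * (hk.fst ▸ ((w₁++s::t::w₂)[k]'hk.lt).2)⟩, hfst ▸ adj, rfl, rfl⟩
      · -- k ≥ w₁.length + 2
        have hkB : FrontIdx Γ (w₁ ++ t :: s :: w₂) v k := by
          have := frontIdx_mid_swap adj hk
          rwa [if_neg (by omega), if_neg (by omega)] at this
        have hgA : (w₁ ++ s::t::w₂)[k]'hk.lt = w₂[k - w₁.length - 2]'(by
            rw [len_mid] at hkl; omega) :=
          mid_get_right w₁ w₂ s t (show w₁.length + 2 ≤ k by omega) _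
        have hgB : (w₁ ++ t::s::w₂)[k]'hkB.lt = w₂[k - w₁.length - 2]'(by
            rw [len_mid] at hkl; omega) :=
          mid_get_right w₁ w₂ t s (show w₁.length + 2 ≤ k by omega) _
        have hcast : hkB.fst ▸ ((w₁++t::s::w₂)[k]'hkB.lt).2
            = hk.fst ▸ ((w₁++s::t::w₂)[k]'hk.lt).2 :=
          cast_snd_congr (hgB.trans hgA.symm) _ _
        by_cases h1 : g * (hk.fst ▸ ((w₁++s::t::w₂)[k]'hk.lt).2) = 1
        · rw [leftmul_erase hg hk h1, leftmul_erase hg hkB (by rw [hcast]; exact h1),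
            er_right _ _ _ _ (by omega), er_right _ _ _ _ (by omega)]
          exact shuf_of_adjSwap ⟨w₁, w₂.eraseIdx (k - w₁.length - 2), s, t, adj, rfl, rfl⟩
        · rw [leftmul_set hg hk h1, leftmul_set hg hkB (by rw [hcast]; exact h1), hcast,
            set_right _ _ _ _ _ (by omega), set_right _ _ _ _ _ (by omega)]
          exact shuf_of_adjSwap ⟨w₁, w₂.set (k - w₁.length - 2) _, s, t, adj, rfl, rfl⟩
  · have hexB : ¬ ∃ k, FrontIdx Γ (w₁ ++ t :: s :: w₂) v k := by
      rintro ⟨k, hk⟩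
      exact hex ⟨_, frontIdx_mid_swap adj.symm hk⟩
    rw [leftmul_of_no_frontIdx hg hex, leftmul_of_no_frontIdx hg hexB]
    exact shuf_of_adjSwap ⟨⟨v,g⟩::w₁, w₂, s, t, adj, rfl, rfl⟩

lemma leftmul_shuf {v : V} (g : G v) {l l' : W} (h : Shuf Γ G l l') :
    Shuf Γ G (leftmul Γ v g l) (leftmul Γ v g l') := by
  induction h with
  | rel _ _ h => exact leftmul_adjSwap g h
  | refl => exact shuf_refl _
  | symm _ _ _ ih => exact shuf_symm ih
  | trans _ _ _ _ _ ih1 ih2 => exact shuf_trans ih1 ih2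



/-! ### The action on shuffle classes of reduced words -/

variable (Γ G) in
abbrev RW := {l : W // Red Γ G l}

variable (Γ G) in
def rwSetoid : Setoid (RW Γ G) :=
  ⟨fun a b => Shuf Γ G a.1 b.1,
    fun _ => shuf_refl _, shuf_symm, shuf_trans⟩

variable (Γ G) in
abbrev N := Quotient (rwSetoid Γ G)

variable (Γ G) in
noncomputable def leftmulQ (v : V) (g : G v) : N Γ G → N Γ G :=
  Quotient.map' (fun a => ⟨leftmul Γ v g a.1, red_leftmul g a.2⟩)
    (fun _ _ hab => leftmul_shuf g hab)

lemma leftmulQ_mk (v : V) (g : G v) (a : RW Γ G) :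
    leftmulQ Γ G v g (Quotient.mk'' a)
      = Quotient.mk'' (⟨leftmul Γ v g a.1, red_leftmul g a.2⟩ : RW Γ G) := rfl

lemma leftmulQ_one (v : V) (x : N Γ G) : leftmulQ Γ G v (1 : G v) x = x := by
  induction x using Quotient.inductionOn' with
  | h a =>
    rw [leftmulQ_mk]
    apply Quotient.sound'
    show Shuf Γ G (leftmul Γ v (1 : G v) a.1) a.1
    rw [leftmul_one]
    exact shuf_refl _

lemma leftmulQ_mul (v : V) (g h : G v) (x : N Γ G) :
    leftmulQ Γ G v g (leftmulQ Γ G v h x) = leftmulQ Γ G v (g * h) x := by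
  induction x using Quotient.inductionOn' with
  | h a =>
    rw [leftmulQ_mk, leftmulQ_mk, leftmulQ_mk]
    exact Quotient.sound' (leftmul_mul g h a.2)

lemma leftmulQ_comm {u v : V} (hadj : Γ.Adj u v) (g : G u) (h : G v) (x : N Γ G) :
    leftmulQ Γ G u g (leftmulQ Γ G v h x) = leftmulQ Γ G v h (leftmulQ Γ G u g x) := by
  induction x using Quotient.inductionOn' with
  | h a =>
    rw [leftmulQ_mk, leftmulQ_mk, leftmulQ_mk, leftmulQ_mk]
    exact Quotient.sound' (leftmul_comm hadj g h)

variable (Γ G) in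
noncomputable def actHom (v : V) : G v →* Equiv.Perm (N Γ G) where
  toFun g :=
    { toFun := leftmulQ Γ G v g
      invFun := leftmulQ Γ G v g⁻¹
      left_inv := fun x => by rw [leftmulQ_mul, inv_mul_cancel, leftmulQ_one]
      right_inv := fun x => by rw [leftmulQ_mul, mul_inv_cancel, leftmulQ_one] }
  map_one' := Equiv.ext fun x => leftmulQ_one v x
  map_mul' g h := Equiv.ext fun x => (leftmulQ_mul v g h x).symm

variable (Γ G) in
noncomputable def bigHom : CoprodI G →* Equiv.Perm (N Γ G) :=
  CoprodI.lift (actHom Γ G)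

open scoped commutatorElement in
lemma bigHom_ker :
    Subgroup.normalClosure (graphProductRels Γ G) ≤ (bigHom Γ G).ker := by
  apply Subgroup.normalClosure_le_normal
  rintro x ⟨u, v, g, h, hadj, rfl⟩
  have hcomm : Commute (actHom Γ G u g) (actHom Γ G v h) := by
    apply Equiv.ext
    intro x
    exact leftmulQ_comm hadj g h x
  have : CoprodI.of g * CoprodI.of h * (CoprodI.of g)⁻¹ * (CoprodI.of h)⁻¹
      = ⁅CoprodI.of g, CoprodI.of h⁆ := rfl
  rw [this, SetLike.mem_coe, MonoidHom.mem_ker, map_commutatorElement]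
  rw [commutatorElement_eq_one_iff_commute]
  simpa [bigHom] using hcomm

variable (Γ G) in
noncomputable def quotHom : GraphProduct Γ G →* Equiv.Perm (N Γ G) :=
  QuotientGroup.lift _ (bigHom Γ G) bigHom_ker

lemma quotHom_of {v : V} (g : G v) :
    quotHom Γ G (GraphProduct.of Γ G g) = actHom Γ G v g := by
  show quotHom Γ G (QuotientGroup.mk (CoprodI.of g)) = _
  show bigHom Γ G (CoprodI.of g) = _
  exact CoprodI.lift_of _ g

lemma quotHom_wordProd {l : W} (hred : Red Γ G l) :
    quotHom Γ G (wordProd Γ G l) (Quotient.mk'' (⟨[], red_nil⟩ : RW Γ G))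
      = Quotient.mk'' (⟨l, hred⟩ : RW Γ G) := by
  induction l with
  | nil => simp [wordProd]
  | cons s l ih =>
    rw [wordProd_cons, map_mul, Equiv.Perm.mul_apply, ih (red_tail hred), quotHom_of]
    have e : ((actHom Γ G s.1) s.2) (Quotient.mk'' (⟨l, red_tail hred⟩ : RW Γ G))
        = leftmulQ Γ G s.1 s.2 (Quotient.mk'' (⟨l, red_tail hred⟩ : RW Γ G)) := rfl
    rw [e, leftmulQ_mk]
    apply congrArg
    exact Subtype.ext (leftmul_cons_of_red hred)

/-- Reduction: every word has a graphically reduced representative of at most its length. -/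
lemma exists_red_rep : ∀ (n : ℕ) (l : W), l.length ≤ n →
    ∃ l' : W, Red Γ G l' ∧ wordProd Γ G l' = wordProd Γ G l ∧ l'.length ≤ l.length := by
  intro n
  induction n with
  | zero =>
    intro l hl
    rw [Nat.le_zero, List.length_eq_zero_iff] at hl
    subst hl
    exact ⟨[], red_nil, rfl, le_refl _⟩
  | succ n ih =>
    intro l hl
    by_cases htriv : ∃ s ∈ l, s.2 = (1 : G s.1)
    · obtain ⟨s, hs, h1⟩ := htriv
      obtain ⟨l₁, l₂, rfl⟩ := List.append_of_mem hs
      have hlen : (l₁ ++ l₂).length ≤ n := by simp at hl ⊢; omega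
      obtain ⟨l', h2, h3, h4⟩ := ih (l₁ ++ l₂) hlen
      refine ⟨l', h2, ?_, by simp at h4 ⊢; omega⟩
      rw [h3]
      simp [h1]
    · push_neg at htriv
      by_cases hred : Red Γ G l
      · exact ⟨l, hred, rfl, le_refl _⟩
      · obtain ⟨l'', h1, h2⟩ := exists_shorter htriv hred
        obtain ⟨l', h3, h4, h5⟩ := ih l'' (by omega)
        exact ⟨l', h3, h4.trans h1, by omega⟩

end GPaux

/-- A word over the union of the vertex groups with all syllables nontrivial has minimal
length among all words representing the same element of the graph product if and only if
it is graphically reduced. -/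
theorem minimal_length_iff_graphically_reduced {V : Type*} (Γ : SimpleGraph V)
    (G : V → Type*) [∀ v, Group (G v)] [∀ v, Nontrivial (G v)]
    (l : List (Σ u, G u)) (hl : ∀ s ∈ l, s.2 ≠ (1 : G s.1)) :
    (∀ l' : List (Σ u, G u), wordProd Γ G l' = wordProd Γ G l → l.length ≤ l'.length)
      ↔ GraphicallyReduced Γ G l := by
  constructor
  · intro hmin
    by_contra hnr
    obtain ⟨l', h1, h2⟩ := GPaux.exists_shorter hl hnr
    exact absurd (hmin l' h1) (by omega)
  · intro hred l' hprod
    have hred' : GPaux.Red Γ G l := hred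
    obtain ⟨l'', hred'', hprod'', hlen''⟩ :=
      GPaux.exists_red_rep l'.length l' (le_refl _)
    have h1 := GPaux.quotHom_wordProd hred'
    have h2 := GPaux.quotHom_wordProd hred''
    rw [hprod''.trans hprod] at h2
    have h3 : Quotient.mk'' (⟨l, hred'⟩ : GPaux.RW Γ G)
        = Quotient.mk'' (⟨l'', hred''⟩ : GPaux.RW Γ G) := h1.symm.trans h2
    have h4 : GPaux.Shuf Γ G l l'' := Quotient.exact' h3
    have h5 := GPaux.shuf_length h4
    omega
end

section
/- Let Γ be a simplicial graph and 𝒢 a collection of nontrivial groups indexed by V(Γ). If w₁ and w₂ are two graphically reduced words over the vertex-groups that represent the same element of the graph product Γ𝒢, then w₂ can be obtained from w₁ by a finite sequence of swaps of two consecutive syllables that belong to adjacent vertex-groups. -/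
open Monoid

namespace GPTest

variable {V : Type*} (Γ : SimpleGraph V) (G : V → Type*) [∀ v, Group (G v)]

open Classical in
noncomputable def rcons (v : V) (g : G v) : List (Σ u, G u) → List (Σ u, G u)
  | [] => if g = 1 then [] else [⟨v, g⟩]
  | ⟨w, a⟩ :: l =>
    if h : w = v then
      (if g * (h ▸ a) = 1 then l else ⟨v, g * (h ▸ a)⟩ :: l)
    else if Γ.Adj w v then ⟨w, a⟩ :: rcons v g l
    else if g = 1 then ⟨w, a⟩ :: l else ⟨v, g⟩ :: ⟨w, a⟩ :: l

def Blocked (v : V) : List (Σ u, G u) → Prop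
  | [] => True
  | s :: l => s.1 ≠ v ∧ (Γ.Adj s.1 v → Blocked v l)

def Red : List (Σ u, G u) → Prop
  | [] => True
  | s :: l => s.2 ≠ 1 ∧ Blocked Γ G s.1 l ∧ Red l

variable {Γ G}

local notation "rr" => Relation.ReflTransGen (AdjSwap Γ G)

lemma adjSwap_symm : Symmetric (AdjSwap Γ G) := by
  rintro l l' ⟨w₁, w₂, s, t, hadj, rfl, rfl⟩
  exact ⟨w₁, w₂, t, s, hadj.symm, rfl, rfl⟩

lemma rr_symm {l l' : List (Σ u, G u)} (h : rr l l') : rr l' l :=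
  @Std.Symm.symm _ _ (@Relation.ReflTransGen.symmetric _ (AdjSwap Γ G) ⟨fun _ _ h => adjSwap_symm h⟩) _ _ h

lemma rr_cons {l l' : List (Σ u, G u)} (x : Σ u, G u) (h : rr l l') :
    rr (x :: l) (x :: l') := by
  refine Relation.ReflTransGen.lift (fun m => x :: m) ?_ _ _ h
  rintro a b ⟨w₁, w₂, s, t, hadj, rfl, rfl⟩
  exact ⟨x :: w₁, w₂, s, t, hadj, rfl, rfl⟩

lemma rr_swap {w₁ w₂ : List (Σ u, G u)} {s t : Σ u, G u} (hadj : Γ.Adj s.1 t.1) :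
    rr (w₁ ++ s :: t :: w₂) (w₁ ++ t :: s :: w₂) :=
  Relation.ReflTransGen.single ⟨w₁, w₂, s, t, hadj, rfl, rfl⟩

lemma rr_swap_nil {w₂ : List (Σ u, G u)} {s t : Σ u, G u} (hadj : Γ.Adj s.1 t.1) :
    rr (s :: t :: w₂) (t :: s :: w₂) :=
  Relation.ReflTransGen.single ⟨[], w₂, s, t, hadj, rfl, rfl⟩

end GPTest

namespace GPTest
variable {V : Type*} {Γ : SimpleGraph V} {G : V → Type*} [∀ v, Group (G v)]
local notation "rr" => Relation.ReflTransGen (AdjSwap Γ G)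

lemma rcons_one {l : List (Σ u, G u)} (hl : Red Γ G l) (v : V) :
    rcons Γ G v 1 l = l := by
  induction l with
  | nil => simp [rcons]
  | cons s l ih =>
    obtain ⟨w, a⟩ := s
    obtain ⟨h1, hb, hred⟩ := hl
    by_cases h : w = v
    · subst h
      simp [rcons, h1]
    · simp only [rcons, dif_neg h]
      by_cases hadj : Γ.Adj w v
      · rw [if_pos hadj, ih hred]
      · simp [if_neg hadj]

lemma rr_rcons_blocked {l : List (Σ u, G u)} {v : V} {g : G v} (hg : g ≠ 1)
    (hb : Blocked Γ G v l) : rr (rcons Γ G v g l) (⟨v, g⟩ :: l) := by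
  induction l with
  | nil => rw [rcons, if_neg hg]
  | cons s l ih =>
    obtain ⟨w, a⟩ := s
    obtain ⟨hne, hbl⟩ := hb
    simp only [rcons, dif_neg hne]
    by_cases hadj : Γ.Adj w v
    · rw [if_pos hadj]
      refine Relation.ReflTransGen.trans (rr_cons _ (ih (hbl hadj))) ?_
      exact rr_swap_nil hadj
    · rw [if_neg hadj, if_neg hg]

end GPTest

namespace GPTest
variable {V : Type*} {Γ : SimpleGraph V} {G : V → Type*} [∀ v, Group (G v)]
local notation "rr" => Relation.ReflTransGen (AdjSwap Γ G)

lemma blocked_rcons {l : List (Σ u, G u)} {u v : V} (g : G v) (hadj : Γ.Adj u v)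
    (hb : Blocked Γ G u l) : Blocked Γ G u (rcons Γ G v g l) := by
  induction l with
  | nil =>
    rw [rcons]
    split_ifs
    · trivial
    · exact ⟨hadj.ne', fun _ => trivial⟩
  | cons t l ih =>
    obtain ⟨w, a⟩ := t
    obtain ⟨hne, hbl⟩ := hb
    by_cases h : w = v
    · subst h
      rw [rcons, dif_pos rfl]
      split_ifs
      · exact hbl (by simpa using hadj.symm)
      · exact ⟨hadj.ne', fun _ => hbl (by simpa using hadj.symm)⟩
    · rw [rcons, dif_neg h]
      split_ifs with h2 h3
      · exact ⟨hne, fun hx => ih (hbl hx)⟩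
      · exact ⟨hne, hbl⟩
      · exact ⟨hadj.ne', fun _ => ⟨hne, hbl⟩⟩

lemma red_rcons {l : List (Σ u, G u)} {v : V} (g : G v) (hl : Red Γ G l) :
    Red Γ G (rcons Γ G v g l) := by
  induction l with
  | nil =>
    rw [rcons]
    split_ifs with h
    · trivial
    · exact ⟨h, trivial, trivial⟩
  | cons s l ih =>
    obtain ⟨w, a⟩ := s
    obtain ⟨h1, hb, hred⟩ := hl
    by_cases h : w = v
    · subst h
      rw [rcons, dif_pos rfl]
      split_ifs with h2
      · exact hred
      · exact ⟨h2, hb, hred⟩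
    · rw [rcons, dif_neg h]
      split_ifs with h2 h3
      · exact ⟨h1, blocked_rcons g h2 hb, ih hred⟩
      · exact ⟨h1, hb, hred⟩
      · exact ⟨h3, ⟨h, fun hx => absurd hx h2⟩, h1, hb, hred⟩

end GPTest

namespace GPTest
open scoped Classical
variable {V : Type*} {Γ : SimpleGraph V} {G : V → Type*} [∀ v, Group (G v)]
local notation "rr" => Relation.ReflTransGen (AdjSwap Γ G)

lemma rcons_nil (v : V) (g : G v) :
    rcons Γ G v g [] = if g = 1 then [] else [⟨v, g⟩] := by rw [rcons]

lemma rcons_merge (v : V) (g a : G v) (l : List (Σ u, G u)) :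
    rcons Γ G v g (⟨v, a⟩ :: l) = if g * a = 1 then l else ⟨v, g * a⟩ :: l := by
  rw [rcons, dif_pos rfl]

lemma rcons_pass {w v : V} (g : G v) (a : G w) (l : List (Σ u, G u)) (hadj : Γ.Adj w v) :
    rcons Γ G v g (⟨w, a⟩ :: l) = ⟨w, a⟩ :: rcons Γ G v g l := by
  rw [rcons, dif_neg hadj.ne, if_pos hadj]

lemma rcons_block {w v : V} (g : G v) (a : G w) (l : List (Σ u, G u)) (h1 : w ≠ v)
    (h2 : ¬ Γ.Adj w v) :
    rcons Γ G v g (⟨w, a⟩ :: l) =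
      if g = 1 then ⟨w, a⟩ :: l else ⟨v, g⟩ :: ⟨w, a⟩ :: l := by
  rw [rcons, dif_neg h1, if_neg h2]

lemma rcons_adjSwap {l l' : List (Σ u, G u)} (h : AdjSwap Γ G l l') (v : V) (g : G v) :
    rr (rcons Γ G v g l) (rcons Γ G v g l') := by
  obtain ⟨w₁, w₂, s, t, hadj, rfl, rfl⟩ := h
  induction w₁ with
  | cons x w₁ ih =>
    obtain ⟨wx, ax⟩ := x
    by_cases h : wx = v
    · subst h
      rw [List.cons_append, List.cons_append, rcons_merge, rcons_merge]
      split_ifs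
      · exact rr_swap hadj
      · exact rr_cons _ (rr_swap hadj)
    · by_cases h2 : Γ.Adj wx v
      · rw [List.cons_append, List.cons_append, rcons_pass _ _ _ h2, rcons_pass _ _ _ h2]
        exact rr_cons _ ih
      · rw [List.cons_append, List.cons_append, rcons_block _ _ _ h h2,
          rcons_block _ _ _ h h2]
        split_ifs
        · exact rr_cons _ (rr_swap hadj)
        · exact rr_cons _ (rr_cons _ (rr_swap hadj))
  | nil =>
    obtain ⟨ws, as⟩ := s
    obtain ⟨wt, at'⟩ := t
    replace hadj : Γ.Adj ws wt := hadj
    simp only [List.nil_append]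
    by_cases h : ws = v
    · subst h
      rw [rcons_merge, rcons_pass _ _ _ hadj.symm, rcons_merge]
      split_ifs
      · exact Relation.ReflTransGen.refl
      · exact rr_swap_nil hadj
    · by_cases h2 : wt = v
      · subst h2
        rw [rcons_pass _ _ _ hadj, rcons_merge, rcons_merge]
        split_ifs
        · exact Relation.ReflTransGen.refl
        · exact rr_swap_nil hadj
      · by_cases h3 : Γ.Adj ws v <;> by_cases h4 : Γ.Adj wt v
        · rw [rcons_pass _ _ _ h3, rcons_pass _ _ _ h4, rcons_pass _ _ _ h4,
            rcons_pass _ _ _ h3]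
          exact rr_swap_nil hadj
        · rw [rcons_pass _ _ _ h3, rcons_block _ _ _ h2 h4, rcons_block _ _ _ h2 h4]
          split_ifs
          · exact rr_swap_nil hadj
          · exact Relation.ReflTransGen.trans (rr_swap_nil h3)
              (rr_cons _ (rr_swap_nil hadj))
        · rw [rcons_block _ _ _ h h3, rcons_pass _ _ _ h4, rcons_block _ _ _ h h3]
          split_ifs
          · exact rr_swap_nil hadj
          · exact Relation.ReflTransGen.trans (rr_cons _ (rr_swap_nil hadj))
              (rr_swap_nil h4.symm)
        · rw [rcons_block _ _ _ h h3, rcons_block _ _ _ h2 h4]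
          split_ifs
          · exact rr_swap_nil hadj
          · exact rr_cons _ (rr_swap_nil hadj)
lemma rcons_rr {l l' : List (Σ u, G u)} (h : rr l l') (v : V) (g : G v) :
    rr (rcons Γ G v g l) (rcons Γ G v g l') := by
  induction h with
  | refl => exact Relation.ReflTransGen.refl
  | tail _ hstep ih => exact Relation.ReflTransGen.trans ih (rcons_adjSwap hstep v g)

end GPTest

namespace GPTest
open scoped Classical
variable {V : Type*} {Γ : SimpleGraph V} {G : V → Type*} [∀ v, Group (G v)]
local notation "rr" => Relation.ReflTransGen (AdjSwap Γ G)

lemma red_nil : Red Γ G ([] : List (Σ u, G u)) := trivial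

lemma red_cons {s : Σ u, G u} {l : List (Σ u, G u)} (h1 : s.2 ≠ 1)
    (h2 : Blocked Γ G s.1 l) (h3 : Red Γ G l) : Red Γ G (s :: l) := by
  rw [Red]; exact ⟨h1, h2, h3⟩

omit [∀ v, Group (G v)] in
lemma blocked_nil (v : V) : Blocked Γ G v ([] : List (Σ u, G u)) := trivial

omit [∀ v, Group (G v)] in
lemma blocked_cons {v : V} {s : Σ u, G u} {l : List (Σ u, G u)} (h1 : s.1 ≠ v)
    (h2 : Γ.Adj s.1 v → Blocked Γ G v l) : Blocked Γ G v (s :: l) := by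
  rw [Blocked]; exact ⟨h1, h2⟩

lemma rcons_mul {l : List (Σ u, G u)} (hl : Red Γ G l) (v : V) (g g' : G v) :
    rr (rcons Γ G v (g * g') l) (rcons Γ G v g (rcons Γ G v g' l)) := by
  induction l with
  | nil =>
    by_cases hg' : g' = 1
    · subst hg'
      rw [mul_one]
      conv_rhs => rw [rcons_nil, if_pos rfl]
    · conv_rhs => rw [rcons_nil, if_neg hg', rcons_merge]
      rw [rcons_nil]
  | cons s l ih =>
    obtain ⟨w, a⟩ := s
    obtain ⟨h1, hb, hred⟩ := hl
    by_cases h : w = v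
    · subst h
      by_cases hc : g' * a = 1
      · conv_rhs => rw [rcons_merge, if_pos hc]
        by_cases hg : g = 1
        · subst hg
          rw [rcons_one hred, rcons_merge, if_pos (by rw [mul_assoc, hc, mul_one])]
        · have hx : g * g' * a = g := by rw [mul_assoc, hc, mul_one]
          rw [rcons_merge, if_neg (by rw [hx]; exact hg), hx]
          exact rr_symm (rr_rcons_blocked hg hb)
      · conv_rhs => rw [rcons_merge, if_neg hc, rcons_merge]
        rw [rcons_merge, mul_assoc]
    · by_cases hadj : Γ.Adj w v
      · conv_rhs => rw [rcons_pass _ _ _ hadj, rcons_pass _ _ _ hadj]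
        rw [rcons_pass _ _ _ hadj]
        exact rr_cons _ (ih hred)
      · by_cases hg' : g' = 1
        · subst hg'
          rw [mul_one, rcons_one (red_cons h1 hb hred)]
        · conv_rhs => rw [rcons_block _ _ _ h hadj, if_neg hg', rcons_merge]
          rw [rcons_block _ _ _ h hadj]

lemma rcons_comm {u v : V} (hadj : Γ.Adj u v) (a : G u) (b : G v)
    (l : List (Σ u, G u)) :
    rr (rcons Γ G u a (rcons Γ G v b l)) (rcons Γ G v b (rcons Γ G u a l)) := by
  have hne : u ≠ v := hadj.ne
  induction l with
  | nil =>
    by_cases hb1 : b = 1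
    · subst hb1
      conv_lhs => rw [rcons_nil, if_pos rfl]
      rw [rcons_one (red_rcons (l := []) a red_nil)]
    · by_cases ha1 : a = 1
      · subst ha1
        conv_lhs => rw [rcons_nil, if_neg hb1,
          rcons_one (red_cons hb1 (blocked_nil _) red_nil)]
        rw [rcons_one (l := []) red_nil, rcons_nil, if_neg hb1]
      · conv_lhs => rw [rcons_nil, if_neg hb1, rcons_pass _ _ _ hadj.symm,
          rcons_nil, if_neg ha1]
        conv_rhs => rw [rcons_nil, if_neg ha1, rcons_pass _ _ _ hadj,
          rcons_nil, if_neg hb1]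
        exact rr_swap_nil hadj.symm
  | cons s l ih =>
    obtain ⟨w, c⟩ := s
    by_cases h : w = v
    · subst h
      by_cases hbc : b * c = 1
      · conv_lhs => rw [rcons_merge, if_pos hbc]
        conv_rhs => rw [rcons_pass _ _ _ hadj.symm, rcons_merge, if_pos hbc]
      · conv_lhs => rw [rcons_merge, if_neg hbc, rcons_pass _ _ _ hadj.symm]
        conv_rhs => rw [rcons_pass _ _ _ hadj.symm, rcons_merge, if_neg hbc]
    · by_cases h2 : w = u
      · subst h2
        by_cases hac : a * c = 1
        · conv_lhs => rw [rcons_pass _ _ _ hadj, rcons_merge, if_pos hac]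
          conv_rhs => rw [rcons_merge, if_pos hac]
        · conv_lhs => rw [rcons_pass _ _ _ hadj, rcons_merge, if_neg hac]
          conv_rhs => rw [rcons_merge, if_neg hac, rcons_pass _ _ _ hadj]
      · by_cases hwu : Γ.Adj w u <;> by_cases hwv : Γ.Adj w v
        · conv_lhs => rw [rcons_pass _ _ _ hwv, rcons_pass _ _ _ hwu]
          conv_rhs => rw [rcons_pass _ _ _ hwu, rcons_pass _ _ _ hwv]
          exact rr_cons _ ih
        · -- Adj w u, ¬ Adj w v
          by_cases hb1 : b = 1
          · conv_lhs => rw [rcons_block _ _ _ h hwv, if_pos hb1, rcons_pass _ _ _ hwu]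
            conv_rhs => rw [rcons_pass _ _ _ hwu, rcons_block _ _ _ h hwv, if_pos hb1]
          · conv_lhs => rw [rcons_block _ _ _ h hwv, if_neg hb1,
              rcons_pass _ _ _ hadj.symm, rcons_pass _ _ _ hwu]
            conv_rhs => rw [rcons_pass _ _ _ hwu, rcons_block _ _ _ h hwv, if_neg hb1]
        · -- ¬ Adj w u, Adj w v
          by_cases ha1 : a = 1
          · conv_lhs => rw [rcons_pass _ _ _ hwv, rcons_block _ _ _ h2 hwu, if_pos ha1]
            conv_rhs => rw [rcons_block _ _ _ h2 hwu, if_pos ha1, rcons_pass _ _ _ hwv]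
          · conv_lhs => rw [rcons_pass _ _ _ hwv, rcons_block _ _ _ h2 hwu, if_neg ha1]
            conv_rhs => rw [rcons_block _ _ _ h2 hwu, if_neg ha1,
              rcons_pass _ _ _ hadj, rcons_pass _ _ _ hwv]
        · -- neither
          by_cases hb1 : b = 1 <;> by_cases ha1 : a = 1
          · conv_lhs => rw [rcons_block _ _ _ h hwv, if_pos hb1,
              rcons_block _ _ _ h2 hwu, if_pos ha1]
            conv_rhs => rw [rcons_block _ _ _ h2 hwu, if_pos ha1,
              rcons_block _ _ _ h hwv, if_pos hb1]
          · conv_lhs => rw [rcons_block _ _ _ h hwv, if_pos hb1,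
              rcons_block _ _ _ h2 hwu, if_neg ha1]
            conv_rhs => rw [rcons_block _ _ _ h2 hwu, if_neg ha1,
              rcons_pass _ _ _ hadj, rcons_block _ _ _ h hwv, if_pos hb1]
          · conv_lhs => rw [rcons_block _ _ _ h hwv, if_neg hb1,
              rcons_pass _ _ _ hadj.symm, rcons_block _ _ _ h2 hwu, if_pos ha1]
            conv_rhs => rw [rcons_block _ _ _ h2 hwu, if_pos ha1,
              rcons_block _ _ _ h hwv, if_neg hb1]
          · conv_lhs => rw [rcons_block _ _ _ h hwv, if_neg hb1,
              rcons_pass _ _ _ hadj.symm, rcons_block _ _ _ h2 hwu, if_neg ha1]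
            conv_rhs => rw [rcons_block _ _ _ h2 hwu, if_neg ha1,
              rcons_pass _ _ _ hadj, rcons_block _ _ _ h hwv, if_neg hb1]
            exact rr_swap_nil hadj.symm

end GPTest

namespace GPTest
open scoped Classical
variable {V : Type*} {Γ : SimpleGraph V} {G : V → Type*} [∀ v, Group (G v)]
local notation "rr" => Relation.ReflTransGen (AdjSwap Γ G)

variable (Γ G) in
def rwSetoid : Setoid {l : List (Σ u, G u) // Red Γ G l} where
  r a b := Relation.ReflTransGen (AdjSwap Γ G) a.1 b.1
  iseqv := ⟨fun _ => Relation.ReflTransGen.refl, fun h => rr_symm h,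
    fun h h' => Relation.ReflTransGen.trans h h'⟩

variable (Γ G) in
def M := Quotient (rwSetoid Γ G)

variable (Γ G) in
noncomputable def act (v : V) (g : G v) : M Γ G → M Γ G :=
  Quotient.map (fun l => ⟨rcons Γ G v g l.1, red_rcons g l.2⟩)
    (fun _ _ h => rcons_rr h v g)

lemma act_mk (v : V) (g : G v) (l : List (Σ u, G u)) (hl : Red Γ G l) :
    act Γ G v g (Quotient.mk (rwSetoid Γ G) ⟨l, hl⟩) =
      Quotient.mk (rwSetoid Γ G) ⟨rcons Γ G v g l, red_rcons g hl⟩ := rfl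

lemma act_one (v : V) (x : M Γ G) : act Γ G v 1 x = x := by
  induction x using Quotient.ind with
  | _ l =>
    refine Quotient.sound ?_
    show rr (rcons Γ G v 1 l.1) l.1
    rw [rcons_one l.2]

lemma act_mul (v : V) (g g' : G v) (x : M Γ G) :
    act Γ G v (g * g') x = act Γ G v g (act Γ G v g' x) := by
  induction x using Quotient.ind with
  | _ l => exact Quotient.sound (rcons_mul l.2 v g g')

lemma act_comm {u v : V} (hadj : Γ.Adj u v) (a : G u) (b : G v) (x : M Γ G) :
    act Γ G u a (act Γ G v b x) = act Γ G v b (act Γ G u a x) := by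
  induction x using Quotient.ind with
  | _ l => exact Quotient.sound (rcons_comm hadj a b l.1)

variable (Γ G) in
noncomputable def permOf (v : V) (g : G v) : Equiv.Perm (M Γ G) where
  toFun := act Γ G v g
  invFun := act Γ G v g⁻¹
  left_inv x := by rw [← act_mul, inv_mul_cancel, act_one]
  right_inv x := by rw [← act_mul, mul_inv_cancel, act_one]

variable (Γ G) in
noncomputable def vhom (v : V) : G v →* Equiv.Perm (M Γ G) :=
  MonoidHom.mk' (permOf Γ G v) (fun g g' => Equiv.ext fun x => act_mul v g g' x)

variable (Γ G) in
noncomputable def bigHom : GraphProduct Γ G →* Equiv.Perm (M Γ G) :=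
  QuotientGroup.lift _ (Monoid.CoprodI.lift (vhom Γ G)) (by
    refine Subgroup.normalClosure_le_normal ?_
    rintro x ⟨u, v, g, h, hadj, rfl⟩
    have : Monoid.CoprodI.lift (vhom Γ G)
        (Monoid.CoprodI.of g * Monoid.CoprodI.of h * (Monoid.CoprodI.of g)⁻¹ *
          (Monoid.CoprodI.of h)⁻¹) = 1 := by
      rw [map_mul, map_mul, map_inv, map_inv, Monoid.CoprodI.lift_of,
        Monoid.CoprodI.lift_of]
      open scoped commutatorElement in show ⁅vhom Γ G u g, vhom Γ G v h⁆ = 1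
      rw [commutatorElement_eq_one_iff_commute]
      exact Equiv.ext fun x => act_comm hadj g h x
    exact this)

lemma bigHom_of {v : V} (g : G v) :
    bigHom Γ G (GraphProduct.of Γ G g) = permOf Γ G v g := by
  show bigHom Γ G ((QuotientGroup.mk' _) (Monoid.CoprodI.of g)) = _
  rw [QuotientGroup.mk'_apply, bigHom]
  erw [QuotientGroup.lift_mk, Monoid.CoprodI.lift_of]
  rfl

lemma bigHom_wordProd (l : List (Σ u, G u)) (hl : Red Γ G l) :
    bigHom Γ G (wordProd Γ G l) (Quotient.mk (rwSetoid Γ G) ⟨[], red_nil⟩) =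
      Quotient.mk (rwSetoid Γ G) ⟨l, hl⟩ := by
  induction l with
  | nil => rw [wordProd]; simp; rfl
  | cons s l ih =>
    obtain ⟨w, a⟩ := s
    rw [Red] at hl
    obtain ⟨h1, hb, hred⟩ := hl
    rw [wordProd, List.map_cons, List.prod_cons, map_mul]
    erw [Equiv.Perm.mul_apply]
    rw [show (List.map (fun s => GraphProduct.of Γ G s.2) l).prod = wordProd Γ G l
      from rfl, ih hred, bigHom_of]
    show act Γ G w a (Quotient.mk (rwSetoid Γ G) ⟨l, hred⟩) =
      Quotient.mk (rwSetoid Γ G) ⟨⟨w, a⟩ :: l, hl⟩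
    rw [act_mk]
    exact Quotient.sound (rr_rcons_blocked h1 hb)

end GPTest

namespace GPTest
variable {V : Type*} {Γ : SimpleGraph V} {G : V → Type*} [∀ v, Group (G v)]

lemma blocked_of_idx {v : V} {l : List (Σ u, G u)}
    (H : ∀ (i : ℕ) (hi : i < l.length), (l.get ⟨i, hi⟩).1 = v →
      ∃ (k : ℕ) (hk : k < l.length), k < i ∧ ¬ Γ.Adj v (l.get ⟨k, hk⟩).1) :
    Blocked Γ G v l := by
  induction l with
  | nil => trivial
  | cons s l ih =>
    refine blocked_cons ?_ ?_
    · intro hs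
      obtain ⟨k, hk, hki, -⟩ := H 0 (by simp) (by simpa using hs)
      omega
    · intro hadj
      apply ih
      intro i hi hv
      obtain ⟨k, hk, hki, hna⟩ := H (i + 1) (by simpa using Nat.succ_lt_succ hi)
        (by simpa using hv)
      cases k with
      | zero => exact absurd hadj.symm (by simpa using hna)
      | succ k =>
        exact ⟨k, by simpa using hk, by omega, by simpa using hna⟩

lemma gr_red {l : List (Σ u, G u)} (h : GraphicallyReduced Γ G l) : Red Γ G l := by
  induction l with
  | nil => trivial
  | cons s l ih =>
    refine red_cons (h.1 s List.mem_cons_self) ?_ ?_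
    · apply blocked_of_idx
      intro i hi hv
      obtain ⟨k, hk, h0k, hki, hna⟩ := h.2 0 (i + 1) (by simp)
        (by simpa using Nat.succ_lt_succ hi) (by omega) (by simpa using hv.symm)
      cases k with
      | zero => omega
      | succ k =>
        exact ⟨k, by simpa using hk, by omega, by simpa using hna⟩
    · apply ih
      constructor
      · intro t ht
        exact h.1 t (List.mem_cons_of_mem _ ht)
      · intro i j hi hj hij hv
        obtain ⟨k, hk, hik, hkj, hna⟩ := h.2 (i + 1) (j + 1)
          (by simpa using Nat.succ_lt_succ hi) (by simpa using Nat.succ_lt_succ hj)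
          (by omega) (by simpa using hv)
        cases k with
        | zero => omega
        | succ k =>
          exact ⟨k, by simpa using hk, by omega, by omega, by simpa using hna⟩

end GPTest

/-- Two graphically reduced words representing the same element of a graph product differ
by a finite sequence of swaps of consecutive syllables lying in adjacent vertex groups. -/
theorem graphically_reduced_unique_up_to_swaps {V : Type*} (Γ : SimpleGraph V)
    (G : V → Type*) [∀ v, Group (G v)] [∀ v, Nontrivial (G v)]
    (w₁ w₂ : List (Σ u, G u))
    (h₁ : GraphicallyReduced Γ G w₁) (h₂ : GraphicallyReduced Γ G w₂)
    (h : wordProd Γ G w₁ = wordProd Γ G w₂) :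
    Relation.ReflTransGen (AdjSwap Γ G) w₁ w₂ := by
  have e1 := GPTest.bigHom_wordProd w₁ (GPTest.gr_red h₁)
  have e2 := GPTest.bigHom_wordProd w₂ (GPTest.gr_red h₂)
  rw [h, e2] at e1
  exact Quotient.exact e1.symm
end

section
/- Let Γ be a simplicial graph and 𝒢 a collection of nontrivial groups indexed by V(Γ). If w = s₁⋯sₙ is a nonempty word of length n ≥ 2 over the union of vertex-groups which equals the identity in the graph product Γ𝒢, then w is not graphically reduced. -/
open Monoid

namespace GPNF

variable {V : Type*} (Γ : SimpleGraph V)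

/-- A bad pattern in a list of vertices: two occurrences of `v` with everything
strictly between adjacent to `v`. -/
def Badv (v : V) (L : List V) : Prop :=
  ∃ p q, p < q ∧ L[p]? = some v ∧ L[q]? = some v ∧
    ∀ (k : ℕ) (u : V), p < k → k < q → L[k]? = some u → Γ.Adj v u

variable {Γ}

lemma mem_of_getElem? {L : List V} {k : ℕ} {u : V} (h : L[k]? = some u) : u ∈ L := by
  rw [List.getElem?_eq_some_iff] at h
  obtain ⟨hk, rfl⟩ := h
  exact List.getElem_mem _

section ins

variable (A B : List V) (v : V)

lemma ge?_ins_lt {k : ℕ} (h : k < A.length) : (A ++ v :: B)[k]? = (A ++ B)[k]? := by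
  rw [List.getElem?_append, if_pos h, List.getElem?_append, if_pos h]

lemma ge?_ins_mid : (A ++ v :: B)[A.length]? = some v := by
  rw [List.getElem?_append_right (le_refl _)]
  simp

lemma ge?_ins_gt {k : ℕ} (h : A.length ≤ k) : (A ++ v :: B)[k + 1]? = (A ++ B)[k]? := by
  rw [List.getElem?_append_right (by omega), List.getElem?_append_right h]
  have : k + 1 - A.length = (k - A.length) + 1 := by omega
  rw [this, List.getElem?_cons_succ]

/-- Inserting a vertex adjacent to everything on its left preserves badness. -/
lemma badv_insert {v w : V} {A B : List V} (hA : ∀ u ∈ A, Γ.Adj v u)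
    (hbad : Badv Γ w (A ++ B)) : Badv Γ w (A ++ v :: B) := by
  classical
  obtain ⟨p, q, hpq, hPv, hQv, hmid⟩ := hbad
  set lift : ℕ → ℕ := fun e => if e < A.length then e else e + 1 with hlift
  have hget : ∀ e, (A ++ v :: B)[lift e]? = (A ++ B)[e]? := by
    intro e
    by_cases h : e < A.length
    · simp only [hlift, if_pos h]; exact ge?_ins_lt A B v h
    · simp only [hlift, if_neg h]; exact ge?_ins_gt A B v (by omega)
  refine ⟨lift p, lift q, by simp only [hlift]; split <;> split <;> omega, ?_, ?_, ?_⟩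
  · rw [hget p]; exact hPv
  · rw [hget q]; exact hQv
  · intro k u hk1 hk2 hk
    by_cases hkA : k = A.length
    · subst hkA
      rw [ge?_ins_mid] at hk
      obtain rfl : v = u := by injection hk
      have hpA : p < A.length := by
        simp only [hlift] at hk1; split at hk1 <;> omega
      have hwA : w ∈ A := by
        have := hPv
        rw [List.getElem?_append, if_pos hpA] at this
        exact mem_of_getElem? this
      exact (hA w hwA).symm
    · rcases lt_or_gt_of_ne hkA with hlt | hgt
      · have : k = lift k := by simp [hlift, hlt]
        rw [this] at hk
        rw [hget k] at hk
        refine hmid k u ?_ ?_ hk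
        · simp only [hlift] at hk1; split at hk1 <;> omega
        · simp only [hlift] at hk2; split at hk2 <;> omega
      · have : k = lift (k - 1) := by simp only [hlift]; split <;> omega
        rw [this, hget (k-1)] at hk
        refine hmid (k-1) u ?_ ?_ hk
        · simp only [hlift] at hk1; split at hk1 <;> omega
        · simp only [hlift] at hk2; split at hk2 <;> omega

/-- Deleting an inserted vertex preserves badness, given the insertion-shape side
conditions. -/
lemma badv_delete {v w : V} {A B : List V} (hA : ∀ u ∈ A, Γ.Adj v u)
    (hB : B = [] ∨ ∃ u₀ B', B = u₀ :: B' ∧ u₀ ≠ v ∧ ¬ Γ.Adj v u₀)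
    (hbad : Badv Γ w (A ++ v :: B)) : Badv Γ w (A ++ B) := by
  classical
  obtain ⟨p, q, hpq, hPv, hQv, hmid⟩ := hbad
  set m := A.length with hm
  by_cases hq : q = m
  · subst hq
    rw [ge?_ins_mid] at hQv
    obtain rfl : v = w := by injection hQv
    have hpA : p < m := hpq
    rw [List.getElem?_append, if_pos hpA] at hPv
    exact absurd (hA _ (mem_of_getElem? hPv)) (Γ.irrefl)
  by_cases hp : p = m
  · subst hp
    rw [ge?_ins_mid] at hPv
    obtain rfl : v = w := by injection hPv
    rcases hB with rfl | ⟨u₀, B', rfl, hu₀v, hu₀⟩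
    · rw [List.getElem?_append_right (by omega)] at hQv
      have : q - m ≥ 1 := by omega
      rcases Nat.exists_eq_add_of_le this with ⟨j, hj⟩
      rw [hj] at hQv
      simp only [add_comm 1 j] at hQv
      rw [List.getElem?_cons_succ] at hQv
      simp at hQv
    · have hq1 : (A ++ v :: u₀ :: B')[m + 1]? = some u₀ := by
        rw [List.getElem?_append_right (by omega)]
        simp [hm]
      rcases eq_or_lt_of_le (show m + 1 ≤ q by omega) with hq2 | hq2
      · rw [← hq2, hq1] at hQv
        exact absurd (by injection hQv) hu₀v
      · exact absurd (hmid (m+1) u₀ (by omega) hq2 hq1) hu₀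
  have hdrop : ∀ e, e ≠ m → (A ++ v :: B)[e]? = (A ++ B)[if e < m then e else e - 1]? := by
    intro e he
    rcases lt_or_gt_of_ne he with h | h
    · rw [if_pos h]; exact ge?_ins_lt A B v h
    · rw [if_neg (by omega)]
      have : e = (e - 1) + 1 := by omega
      rw [this]
      exact ge?_ins_gt A B v (by omega)
  refine ⟨if p < m then p else p - 1, if q < m then q else q - 1,
    by split <;> split <;> omega, ?_, ?_, ?_⟩
  · rw [← hdrop p hp]; exact hPv
  · rw [← hdrop q hq]; exact hQv
  · intro k u hk1 hk2 hk
    set k' := if k < m then k else k + 1 with hk'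
    have hkne : k' ≠ m := by simp only [hk']; split <;> omega
    have : (A ++ v :: B)[k']? = (A ++ B)[k]? := by
      rw [hdrop k' hkne]
      congr 1
      rcases lt_or_ge k m with h | h
      · simp [hk', h]
      · simp only [hk', if_neg (by omega : ¬ k < m), if_neg (by omega : ¬ k + 1 < m)]
        omega
    refine hmid k' u ?_ ?_ (by rw [this]; exact hk)
    · simp only [hk'] at *; split at hk1 <;> split <;> omega
    · simp only [hk'] at *; split at hk2 <;> split <;> omega

end ins

section swap

variable {A B : List V} {x y : V}

lemma ge?_pair_m (A B : List V) (x y : V) : (A ++ x :: y :: B)[A.length]? = some x := by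
  rw [List.getElem?_append_right (le_refl _)]; simp

lemma ge?_pair_m1 (A B : List V) (x y : V) :
    (A ++ x :: y :: B)[A.length + 1]? = some y := by
  rw [List.getElem?_append_right (by omega)]
  have : A.length + 1 - A.length = 1 := by omega
  rw [this]; simp

lemma ge?_pair_eq (A B : List V) (x y : V) {k : ℕ} (h1 : k ≠ A.length)
    (h2 : k ≠ A.length + 1) : (A ++ x :: y :: B)[k]? = (A ++ y :: x :: B)[k]? := by
  rcases lt_or_ge k A.length with h | h
  · rw [List.getElem?_append, if_pos h, List.getElem?_append, if_pos h]
  · rw [List.getElem?_append_right h, List.getElem?_append_right h]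
    have : k - A.length = (k - A.length - 2) + 1 + 1 := by omega
    rw [this, List.getElem?_cons_succ, List.getElem?_cons_succ,
      List.getElem?_cons_succ, List.getElem?_cons_succ]

/-- Swapping two adjacent-vertex entries preserves badness. -/
lemma badv_swap {w : V} (hxy : Γ.Adj x y)
    (hbad : Badv Γ w (A ++ y :: x :: B)) : Badv Γ w (A ++ x :: y :: B) := by
  obtain ⟨p, q, hpq, hPv, hQv, hmid⟩ := hbad
  set m := A.length with hm
  have hLm : (A ++ y :: x :: B)[m]? = some y := ge?_pair_m A B y x
  have hLm1 : (A ++ y :: x :: B)[m + 1]? = some x := ge?_pair_m1 A B y x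
  have hMm : (A ++ x :: y :: B)[m]? = some x := ge?_pair_m A B x y
  have hMm1 : (A ++ x :: y :: B)[m + 1]? = some y := ge?_pair_m1 A B x y
  have hxyne : x ≠ y := hxy.ne
  by_cases hp : p = m
  · subst hp
    rw [hLm] at hPv
    have hw : w = y := by injection hPv with h; exact h.symm
    have hq2 : q ≠ m + 1 := by
      intro hq; rw [hq, hLm1] at hQv; rw [hw] at hQv
      exact hxyne (by injection hQv)
    have hq3 : m + 1 < q := by omega
    refine ⟨m + 1, q, hq3, by rw [hw]; exact hMm1, ?_, ?_⟩
    · rw [ge?_pair_eq A B x y (by omega) (by omega)]; exact hQv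
    · intro k u hk1 hk2 hk
      refine hmid k u (by omega) hk2 ?_
      rw [← ge?_pair_eq A B x y (by omega) (by omega)]; exact hk
  · by_cases hp1 : p = m + 1
    · subst hp1
      rw [hLm1] at hPv
      have hw : w = x := by injection hPv with h; exact h.symm
      refine ⟨m, q, by omega, by rw [hw]; exact hMm, ?_, ?_⟩
      · rw [ge?_pair_eq A B x y (by omega) (by omega)]; exact hQv
      · intro k u hk1 hk2 hk
        by_cases hkm : k = m + 1
        · rw [hkm, hMm1] at hk
          have hu : u = y := by injection hk with h; exact h.symm
          rw [hw, hu]; exact hxy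
        · refine hmid k u (by omega) hk2 ?_
          rw [← ge?_pair_eq A B x y (by omega) hkm]; exact hk
    · by_cases hq : q = m
      · subst hq
        rw [hLm] at hQv
        have hw : w = y := by injection hQv with h; exact h.symm
        refine ⟨p, m + 1, by omega, ?_, by rw [hw]; exact hMm1, ?_⟩
        · rw [ge?_pair_eq A B x y hp (by omega)]; exact hPv
        · intro k u hk1 hk2 hk
          by_cases hkm : k = m
          · rw [hkm, hMm] at hk
            have hu : u = x := by injection hk with h; exact h.symm
            rw [hw, hu]; exact hxy.symm
          · refine hmid k u hk1 (by omega) ?_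
            rw [← ge?_pair_eq A B x y hkm (by omega)]; exact hk
      · by_cases hq1 : q = m + 1
        · subst hq1
          rw [hLm1] at hQv
          have hw : w = x := by injection hQv with h; exact h.symm
          have hpm : p < m := by omega
          refine ⟨p, m, hpm, ?_, by rw [hw]; exact hMm, ?_⟩
          · rw [ge?_pair_eq A B x y hp (by omega)]; exact hPv
          · intro k u hk1 hk2 hk
            refine hmid k u hk1 (by omega) ?_
            rw [← ge?_pair_eq A B x y (by omega) (by omega)]; exact hk
        · refine ⟨p, q, hpq, ?_, ?_, ?_⟩
          · rw [ge?_pair_eq A B x y hp hp1]; exact hPv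
          · rw [ge?_pair_eq A B x y hq hq1]; exact hQv
          · intro k u hk1 hk2 hk
            by_cases hkm : k = m
            · rw [hkm, hMm] at hk
              have hu : u = x := by injection hk with h; exact h.symm
              rw [hu]
              exact hmid (m+1) x (by omega) (by omega) hLm1
            · by_cases hkm1 : k = m + 1
              · rw [hkm1, hMm1] at hk
                have hu : u = y := by injection hk with h; exact h.symm
                rw [hu]
                exact hmid m y (by omega) (by omega) hLm
              · refine hmid k u hk1 hk2 ?_
                rw [← ge?_pair_eq A B x y hkm hkm1]; exact hk

end swap

section words

open scoped Classical

variable (Γ) (G : V → Type*) [∀ v, Group (G v)]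

/-- Multiply `g ∈ G v` into a word, commuting it past adjacent syllables. -/
noncomputable def Pw (v : V) (g : G v) : List (Σ u, G u) → List (Σ u, G u)
  | [] => [⟨v, g⟩]
  | ⟨u, x⟩ :: l =>
    if h : u = v then
      (if g * (h ▸ x) = 1 then l else ⟨v, g * (h ▸ x)⟩ :: l)
    else if Γ.Adj v u then ⟨u, x⟩ :: Pw v g l
    else ⟨v, g⟩ :: ⟨u, x⟩ :: l

variable {Γ G}

@[simp] lemma Pw_nil (v : V) (g : G v) : Pw Γ G v g [] = [⟨v, g⟩] := rfl

lemma Pw_cons_same (v : V) (g x : G v) (l : List (Σ u, G u)) :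
    Pw Γ G v g (⟨v, x⟩ :: l) = if g * x = 1 then l else ⟨v, g * x⟩ :: l := by
  rw [Pw]
  simp

lemma Pw_cons_adj {v u : V} (g : G v) (x : G u) (l : List (Σ u, G u))
    (h : u ≠ v) (ha : Γ.Adj v u) :
    Pw Γ G v g (⟨u, x⟩ :: l) = ⟨u, x⟩ :: Pw Γ G v g l := by
  rw [Pw]
  simp [h, ha]

lemma Pw_cons_nadj {v u : V} (g : G v) (x : G u) (l : List (Σ u, G u))
    (h : u ≠ v) (ha : ¬ Γ.Adj v u) :
    Pw Γ G v g (⟨u, x⟩ :: l) = ⟨v, g⟩ :: ⟨u, x⟩ :: l := by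
  rw [Pw]
  simp [h, ha]

/-- The structure of `Pw v g l` : either `g` was inserted as a new syllable
just before the first non-adjacent syllable, or it was merged into a syllable
of vertex `v` reachable through adjacent syllables. -/
lemma Pw_shape (v : V) (g : G v) (l : List (Σ u, G u)) :
    (∃ a, ∃ b, l = a ++ b ∧ (∀ s ∈ a, Γ.Adj v s.1) ∧ Pw Γ G v g l = a ++ ⟨v, g⟩ :: b ∧
      (b = [] ∨ ∃ s b', b = s :: b' ∧ s.1 ≠ v ∧ ¬ Γ.Adj v s.1)) ∨
    (∃ a, ∃ (y : G v), ∃ b, l = a ++ ⟨v, y⟩ :: b ∧ (∀ s ∈ a, Γ.Adj v s.1) ∧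
      Pw Γ G v g l = if g * y = 1 then a ++ b else a ++ ⟨v, g * y⟩ :: b) := by
  induction l with
  | nil => exact Or.inl ⟨[], [], by simp, by simp, by simp, Or.inl rfl⟩
  | cons s l ih =>
    obtain ⟨u, x⟩ := s
    by_cases hu : u = v
    · subst hu
      exact Or.inr ⟨[], x, l, by simp, by simp, by simpa using Pw_cons_same u g x l⟩
    · by_cases ha : Γ.Adj v u
      · rcases ih with ⟨a, b, hl, hadj, hP, hside⟩ | ⟨a, y, b, hl, hadj, hP⟩
        · refine Or.inl ⟨⟨u, x⟩ :: a, b, by simp [hl], ?_, ?_, hside⟩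
          · intro s hs
            rcases List.mem_cons.1 hs with rfl | hs
            · exact ha
            · exact hadj s hs
          · rw [Pw_cons_adj g x l hu ha, hP]; simp
        · refine Or.inr ⟨⟨u, x⟩ :: a, y, b, by simp [hl], ?_, ?_⟩
          · intro s hs
            rcases List.mem_cons.1 hs with rfl | hs
            · exact ha
            · exact hadj s hs
          · rw [Pw_cons_adj g x l hu ha, hP]
            split <;> simp
      · exact Or.inl ⟨[], ⟨u, x⟩ :: l, by simp, by simp,
          by simpa using Pw_cons_nadj g x l hu ha, Or.inr ⟨⟨u, x⟩, l, rfl, hu, ha⟩⟩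


variable (Γ G)

/-- Reduced words, via the vertex lists. -/
def RedW (l : List (Σ u, G u)) : Prop :=
  (∀ s ∈ l, s.2 ≠ (1 : G s.1)) ∧ ∀ w : V, ¬ Badv Γ w (l.map Sigma.fst)

variable {Γ G}

lemma redW_nil : RedW Γ G [] := by
  refine ⟨by simp, fun w hbad => ?_⟩
  obtain ⟨p, q, hpq, hP, _, _⟩ := hbad
  simp at hP

lemma redW_tail {s : Σ u, G u} {l : List (Σ u, G u)} (h : RedW Γ G (s :: l)) :
    RedW Γ G l := by
  refine ⟨fun t ht => h.1 t (List.mem_cons_of_mem s ht), fun w hbad => ?_⟩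
  refine h.2 w ?_
  have := badv_insert (v := s.1) (A := []) (B := l.map Sigma.fst) (by simp) (by simpa using hbad)
  simpa using this

/-- From a decomposition with adjacent middle we get a bad pattern. -/
lemma badv_of_decomp (A M B : List V) (v : V) (hM : ∀ u ∈ M, Γ.Adj v u) :
    Badv Γ v (A ++ v :: (M ++ v :: B)) := by
  refine ⟨A.length, A.length + M.length + 1, by omega, ge?_ins_mid A _ v, ?_, ?_⟩
  · rw [List.getElem?_append_right (by omega)]
    have : A.length + M.length + 1 - A.length = M.length + 1 := by omega
    rw [this, List.getElem?_cons_succ]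
    exact ge?_ins_mid M B v
  · intro k u hk1 hk2 hk
    rw [List.getElem?_append_right (by omega)] at hk
    have hkA : k - A.length = (k - A.length - 1) + 1 := by omega
    rw [hkA, List.getElem?_cons_succ] at hk
    rw [List.getElem?_append, if_pos (by omega)] at hk
    exact hM u (mem_of_getElem? hk)

/-- Being reduced rules out a pullable `v`-syllable after a `v`-syllable head. -/
lemma noPull_of_redW_cons {v : V} {x : G v} {l : List (Σ u, G u)}
    (h : RedW Γ G (⟨v, x⟩ :: l)) :
    ∀ (a : List (Σ u, G u)) (y : G v) (b : List (Σ u, G u)),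
      l = a ++ ⟨v, y⟩ :: b → (∀ s ∈ a, Γ.Adj v s.1) → False := by
  intro a y b hl ha
  refine h.2 v ?_
  have := badv_of_decomp [] (a.map Sigma.fst) (b.map Sigma.fst) v
    (by intro u hu; obtain ⟨s, hs, rfl⟩ := List.mem_map.1 hu; exact ha s hs)
  simpa [hl] using this

/-- `Pw` preserves reducedness. -/
lemma redW_Pw {v : V} {g : G v} (hg : g ≠ 1) {l : List (Σ u, G u)}
    (hl : RedW Γ G l) : RedW Γ G (Pw Γ G v g l) := by
  rcases Pw_shape v g l with ⟨a, b, hab, hadj, hP, hside⟩ | ⟨a, y, b, hab, hadj, hP⟩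
  · constructor
    · intro s hs
      rw [hP] at hs
      rcases List.mem_append.1 hs with hs | hs
      · exact hl.1 s (by rw [hab]; exact List.mem_append.2 (Or.inl hs))
      · rcases List.mem_cons.1 hs with rfl | hs
        · exact hg
        · exact hl.1 s (by rw [hab]; exact List.mem_append.2 (Or.inr hs))
    · intro w hbad
      rw [hP] at hbad
      have hbad' : Badv Γ w (a.map Sigma.fst ++ v :: b.map Sigma.fst) := by
        simpa using hbad
      have h2 : Badv Γ w (a.map Sigma.fst ++ b.map Sigma.fst) := by
        refine badv_delete ?_ ?_ hbad'
        · intro u hu; obtain ⟨s, hs, rfl⟩ := List.mem_map.1 hu; exact hadj s hs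
        · rcases hside with rfl | ⟨s, b', rfl, hsv, hsna⟩
          · exact Or.inl (by simp)
          · exact Or.inr ⟨s.1, b'.map Sigma.fst, by simp, hsv, hsna⟩
      refine hl.2 w ?_
      rw [hab]
      simpa using h2
  · by_cases hgy : g * y = 1
    · rw [if_pos hgy] at hP
      constructor
      · intro s hs
        rw [hP] at hs
        refine hl.1 s ?_
        rw [hab]
        rcases List.mem_append.1 hs with hs | hs
        · exact List.mem_append.2 (Or.inl hs)
        · exact List.mem_append.2 (Or.inr (List.mem_cons_of_mem _ hs))
      · intro w hbad
        rw [hP] at hbad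
        have hbad' : Badv Γ w (a.map Sigma.fst ++ b.map Sigma.fst) := by simpa using hbad
        have h2 : Badv Γ w (a.map Sigma.fst ++ v :: b.map Sigma.fst) := by
          refine badv_insert ?_ hbad'
          intro u hu; obtain ⟨s, hs, rfl⟩ := List.mem_map.1 hu; exact hadj s hs
        refine hl.2 w ?_
        rw [hab]
        simpa using h2
    · rw [if_neg hgy] at hP
      constructor
      · intro s hs
        rw [hP] at hs
        rcases List.mem_append.1 hs with hs | hs
        · exact hl.1 s (by rw [hab]; exact List.mem_append.2 (Or.inl hs))
        · rcases List.mem_cons.1 hs with rfl | hs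
          · exact hgy
          · exact hl.1 s (by rw [hab]; exact List.mem_append.2 (Or.inr (List.mem_cons_of_mem _ hs)))
      · intro w hbad
        rw [hP] at hbad
        refine hl.2 w ?_
        rw [hab]
        simpa using hbad


variable (Γ G)

/-- Equivalence generated by adjacent swaps. -/
abbrev WEq (l l' : List (Σ u, G u)) : Prop := Relation.EqvGen (AdjSwap Γ G) l l'

variable {Γ G}

lemma adjSwap_length {l l' : List (Σ u, G u)} (h : AdjSwap Γ G l l') :
    l.length = l'.length := by
  obtain ⟨w₁, w₂, s, t, _, rfl, rfl⟩ := h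
  simp

lemma weq_length {l l' : List (Σ u, G u)} (h : WEq Γ G l l') : l.length = l'.length := by
  induction h with
  | rel _ _ h => exact adjSwap_length h
  | refl => rfl
  | symm _ _ _ ih => omega
  | trans _ _ _ _ _ ih1 ih2 => omega

lemma adjSwap_cons (s : Σ u, G u) {l l' : List (Σ u, G u)} (h : AdjSwap Γ G l l') :
    AdjSwap Γ G (s :: l) (s :: l') := by
  obtain ⟨w₁, w₂, a, b, hab, rfl, rfl⟩ := h
  exact ⟨s :: w₁, w₂, a, b, hab, by simp, by simp⟩

lemma weq_cons (s : Σ u, G u) {l l' : List (Σ u, G u)} (h : WEq Γ G l l') :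
    WEq Γ G (s :: l) (s :: l') := by
  induction h with
  | rel _ _ h => exact Relation.EqvGen.rel _ _ (adjSwap_cons s h)
  | refl x => exact Relation.EqvGen.refl _
  | symm _ _ _ ih => exact ih.symm
  | trans _ _ _ _ _ ih1 ih2 => exact ih1.trans _ _ _ ih2

lemma redW_of_adjSwap {l l' : List (Σ u, G u)} (h : AdjSwap Γ G l l')
    (hl : RedW Γ G l) : RedW Γ G l' := by
  obtain ⟨w₁, w₂, s, t, hst, rfl, rfl⟩ := h
  constructor
  · intro r hr
    refine hl.1 r ?_
    simp only [List.mem_append, List.mem_cons] at hr ⊢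
    tauto
  · intro w hbad
    refine hl.2 w ?_
    have : Badv Γ w (w₁.map Sigma.fst ++ t.1 :: s.1 :: w₂.map Sigma.fst) := by
      simpa using hbad
    have := badv_swap hst this
    simpa using this

lemma redW_iff_of_weq {l l' : List (Σ u, G u)} (h : WEq Γ G l l') :
    RedW Γ G l ↔ RedW Γ G l' := by
  induction h with
  | rel x y h =>
    constructor
    · exact redW_of_adjSwap h
    · refine redW_of_adjSwap ?_
      obtain ⟨w₁, w₂, s, t, hst, h1, h2⟩ := h
      exact ⟨w₁, w₂, t, s, hst.symm, h2, h1⟩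
  | refl x => rfl
  | symm _ _ _ ih => exact ih.symm
  | trans _ _ _ _ _ ih1 ih2 => exact ih1.trans ih2

/-- A syllable can be bubbled through a block of adjacent syllables. -/
lemma weq_bubble {v : V} (g : G v) {a : List (Σ u, G u)} (b : List (Σ u, G u))
    (ha : ∀ s ∈ a, Γ.Adj v s.1) :
    WEq Γ G (⟨v, g⟩ :: (a ++ b)) (a ++ ⟨v, g⟩ :: b) := by
  induction a with
  | nil => exact Relation.EqvGen.refl _
  | cons s a ih =>
    have h1 : AdjSwap Γ G (⟨v, g⟩ :: s :: (a ++ b)) (s :: ⟨v, g⟩ :: (a ++ b)) :=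
      ⟨[], a ++ b, ⟨v, g⟩, s, ha s (by simp), by simp, by simp⟩
    have h2 : WEq Γ G (s :: ⟨v, g⟩ :: (a ++ b)) (s :: (a ++ ⟨v, g⟩ :: b)) :=
      weq_cons s (ih (fun t ht => ha t (List.mem_cons_of_mem s ht)))
    exact ((Relation.EqvGen.rel _ _ h1).trans _ _ _ h2).trans _ _ _
      (by simp; exact Relation.EqvGen.refl _)

/-- `Pw` is compatible with a single adjacent swap. -/
lemma Pw_adjSwap (v : V) (g : G v) {l l' : List (Σ u, G u)} (h : AdjSwap Γ G l l') :
    WEq Γ G (Pw Γ G v g l) (Pw Γ G v g l') := by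
  obtain ⟨w₁, w₂, ⟨u₁, x₁⟩, ⟨u₂, x₂⟩, hadj, rfl, rfl⟩ := h
  simp only at hadj
  induction w₁ with
  | nil =>
    simp only [List.nil_append]
    by_cases h1 : u₁ = v
    · subst h1
      have h2 : u₂ ≠ u₁ := fun h => (by subst h; exact Γ.irrefl hadj)
      have ha2 : Γ.Adj u₁ u₂ := hadj
      rw [Pw_cons_same, Pw_cons_adj _ _ _ h2 ha2, Pw_cons_same]
      by_cases hgx : g * x₁ = 1
      · rw [if_pos hgx, if_pos hgx]
        exact Relation.EqvGen.refl _
      · rw [if_neg hgx, if_neg hgx]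
        exact Relation.EqvGen.rel _ _ ⟨[], w₂, ⟨u₁, g * x₁⟩, ⟨u₂, x₂⟩, ha2, by simp, by simp⟩
    · by_cases h2 : u₂ = v
      · subst h2
        have ha1 : Γ.Adj u₂ u₁ := hadj.symm
        rw [Pw_cons_adj _ _ _ h1 ha1, Pw_cons_same, Pw_cons_same]
        by_cases hgx : g * x₂ = 1
        · rw [if_pos hgx, if_pos hgx]
          exact Relation.EqvGen.refl _
        · rw [if_neg hgx, if_neg hgx]
          exact (Relation.EqvGen.rel _ _
            ⟨[], w₂, ⟨u₂, g * x₂⟩, ⟨u₁, x₁⟩, ha1, by simp, by simp⟩).symm _ _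
      · by_cases ha1 : Γ.Adj v u₁ <;> by_cases ha2 : Γ.Adj v u₂
        · rw [Pw_cons_adj _ _ _ h1 ha1, Pw_cons_adj _ _ _ h2 ha2,
            Pw_cons_adj _ _ _ h2 ha2, Pw_cons_adj _ _ _ h1 ha1]
          exact Relation.EqvGen.rel _ _
            ⟨[], Pw Γ G v g w₂, ⟨u₁, x₁⟩, ⟨u₂, x₂⟩, hadj, by simp, by simp⟩
        · rw [Pw_cons_adj _ _ _ h1 ha1, Pw_cons_nadj _ _ _ h2 ha2,
            Pw_cons_nadj _ _ _ h2 ha2]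
          have step1 : AdjSwap Γ G (⟨u₁, x₁⟩ :: ⟨v, g⟩ :: ⟨u₂, x₂⟩ :: w₂)
              (⟨v, g⟩ :: ⟨u₁, x₁⟩ :: ⟨u₂, x₂⟩ :: w₂) :=
            ⟨[], ⟨u₂, x₂⟩ :: w₂, ⟨u₁, x₁⟩, ⟨v, g⟩, ha1.symm, by simp, by simp⟩
          have step2 : AdjSwap Γ G (⟨v, g⟩ :: ⟨u₁, x₁⟩ :: ⟨u₂, x₂⟩ :: w₂)
              (⟨v, g⟩ :: ⟨u₂, x₂⟩ :: ⟨u₁, x₁⟩ :: w₂) :=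
            ⟨[⟨v, g⟩], w₂, ⟨u₁, x₁⟩, ⟨u₂, x₂⟩, hadj, by simp, by simp⟩
          exact (Relation.EqvGen.rel _ _ step1).trans _ _ _ (Relation.EqvGen.rel _ _ step2)
        · rw [Pw_cons_nadj _ _ _ h1 ha1, Pw_cons_adj _ _ _ h2 ha2,
            Pw_cons_nadj _ _ _ h1 ha1]
          have step1 : AdjSwap Γ G (⟨v, g⟩ :: ⟨u₁, x₁⟩ :: ⟨u₂, x₂⟩ :: w₂)
              (⟨v, g⟩ :: ⟨u₂, x₂⟩ :: ⟨u₁, x₁⟩ :: w₂) :=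
            ⟨[⟨v, g⟩], w₂, ⟨u₁, x₁⟩, ⟨u₂, x₂⟩, hadj, by simp, by simp⟩
          have step2 : AdjSwap Γ G (⟨v, g⟩ :: ⟨u₂, x₂⟩ :: ⟨u₁, x₁⟩ :: w₂)
              (⟨u₂, x₂⟩ :: ⟨v, g⟩ :: ⟨u₁, x₁⟩ :: w₂) :=
            ⟨[], ⟨u₁, x₁⟩ :: w₂, ⟨v, g⟩, ⟨u₂, x₂⟩, ha2, by simp, by simp⟩
          exact (Relation.EqvGen.rel _ _ step1).trans _ _ _ (Relation.EqvGen.rel _ _ step2)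
        · rw [Pw_cons_nadj _ _ _ h1 ha1, Pw_cons_nadj _ _ _ h2 ha2]
          exact Relation.EqvGen.rel _ _
            ⟨[⟨v, g⟩], w₂, ⟨u₁, x₁⟩, ⟨u₂, x₂⟩, hadj, by simp, by simp⟩
  | cons r w₁ ih =>
    obtain ⟨ur, xr⟩ := r
    by_cases hr : ur = v
    · subst hr
      simp only [List.cons_append]
      rw [Pw_cons_same, Pw_cons_same]
      by_cases hgx : g * xr = 1
      · rw [if_pos hgx, if_pos hgx]
        exact Relation.EqvGen.rel _ _ ⟨w₁, w₂, ⟨u₁, x₁⟩, ⟨u₂, x₂⟩, hadj, rfl, rfl⟩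
      · rw [if_neg hgx, if_neg hgx]
        exact Relation.EqvGen.rel _ _
          ⟨⟨ur, g * xr⟩ :: w₁, w₂, ⟨u₁, x₁⟩, ⟨u₂, x₂⟩, hadj, by simp, by simp⟩
    · by_cases har : Γ.Adj v ur
      · simp only [List.cons_append]
        rw [Pw_cons_adj _ _ _ hr har, Pw_cons_adj _ _ _ hr har]
        exact weq_cons _ ih
      · simp only [List.cons_append]
        rw [Pw_cons_nadj _ _ _ hr har, Pw_cons_nadj _ _ _ hr har]
        exact Relation.EqvGen.rel _ _
          ⟨⟨v, g⟩ :: ⟨ur, xr⟩ :: w₁, w₂, ⟨u₁, x₁⟩, ⟨u₂, x₂⟩, hadj, by simp, by simp⟩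

lemma Pw_weq (v : V) (g : G v) {l l' : List (Σ u, G u)} (h : WEq Γ G l l') :
    WEq Γ G (Pw Γ G v g l) (Pw Γ G v g l') := by
  induction h with
  | rel _ _ h => exact Pw_adjSwap v g h
  | refl x => exact Relation.EqvGen.refl _
  | symm _ _ _ ih => exact ih.symm _ _
  | trans _ _ _ _ _ ih1 ih2 => exact ih1.trans _ _ _ ih2


/-- Composition law for `Pw` on reduced words. -/
lemma Pw_comp {v : V} {g h : G v} (hg : g ≠ 1) (hh : h ≠ 1)
    {l : List (Σ u, G u)} (hl : RedW Γ G l) :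
    WEq Γ G (Pw Γ G v g (Pw Γ G v h l))
      (if g * h = 1 then l else Pw Γ G v (g * h) l) := by
  induction l with
  | nil =>
    rw [Pw_nil, Pw_cons_same]
    split
    · exact Relation.EqvGen.refl _
    · rw [Pw_nil]; exact Relation.EqvGen.refl _
  | cons s l ih =>
    obtain ⟨u, x⟩ := s
    by_cases hu : u = v
    · subst hu
      by_cases hx : h * x = 1
      · -- the `h`-multiplication deletes the head syllable
        rw [Pw_cons_same, if_pos hx]
        have hnp := noPull_of_redW_cons hl
        have hgl : ∃ a, ∃ b, l = a ++ b ∧ (∀ s ∈ a, Γ.Adj u s.1) ∧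
            Pw Γ G u g l = a ++ ⟨u, g⟩ :: b := by
          rcases Pw_shape u g l with ⟨a, b, hab, hadj, hP, _⟩ | ⟨a, y, b, hab, hadj, _⟩
          · exact ⟨a, b, hab, hadj, hP⟩
          · exact (hnp a y b hab hadj).elim
        obtain ⟨a, b, hab, hadj, hP⟩ := hgl
        have hbub : WEq Γ G (Pw Γ G u g l) (⟨u, g⟩ :: l) := by
          rw [hP, hab]
          exact (weq_bubble g b hadj).symm _ _
        by_cases hgh : g * h = 1
        · rw [if_pos hgh]
          have hgx : g = x := by
            have h1 : g = h⁻¹ := mul_eq_one_iff_eq_inv.1 hgh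
            have h2 : h⁻¹ = x := mul_eq_one_iff_inv_eq.1 hx
            rw [h1, h2]
          have hc : (⟨u, x⟩ : Σ w, G w) :: l = ⟨u, g⟩ :: l := by rw [hgx]
          rw [hc]
          exact hbub
        · rw [if_neg hgh, Pw_cons_same]
          have hghx : g * h * x = g := by rw [mul_assoc, hx, mul_one]
          rw [hghx, if_neg hg]
          exact hbub
      · rw [Pw_cons_same, if_neg hx, Pw_cons_same]
        by_cases hgh : g * h = 1
        · rw [if_pos hgh]
          have hgx : g * (h * x) = x := by rw [← mul_assoc, hgh, one_mul]
          rw [hgx, if_neg (hl.1 ⟨u, x⟩ (by simp))]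
          exact Relation.EqvGen.refl _
        · rw [if_neg hgh, Pw_cons_same]
          have : g * (h * x) = g * h * x := by rw [mul_assoc]
          rw [this]
          exact Relation.EqvGen.refl _
    · by_cases ha : Γ.Adj v u
      · rw [Pw_cons_adj _ _ _ hu ha, Pw_cons_adj _ _ _ hu ha]
        have ih' := ih (redW_tail hl)
        refine (weq_cons _ ih').trans _ _ _ ?_
        split
        · exact Relation.EqvGen.refl _
        · rw [Pw_cons_adj _ _ _ hu ha]
          exact Relation.EqvGen.refl _
      · rw [Pw_cons_nadj _ _ _ hu ha, Pw_cons_same]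
        split
        · exact Relation.EqvGen.refl _
        · rw [Pw_cons_nadj _ _ _ hu ha]
          exact Relation.EqvGen.refl _

/-- Commutation law for `Pw` along an edge. -/
lemma Pw_commute {u v : V} (huv : Γ.Adj u v) (g : G u) (h : G v)
    (l : List (Σ u, G u)) :
    WEq Γ G (Pw Γ G u g (Pw Γ G v h l)) (Pw Γ G v h (Pw Γ G u g l)) := by
  have huvne : u ≠ v := huv.ne
  induction l with
  | nil =>
    rw [Pw_nil, Pw_nil, Pw_cons_adj _ _ _ (Ne.symm huvne) huv,
      Pw_cons_adj _ _ _ huvne huv.symm, Pw_nil, Pw_nil]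
    exact Relation.EqvGen.rel _ _
      ⟨[], [], ⟨v, h⟩, ⟨u, g⟩, huv.symm, by simp, by simp⟩
  | cons s l ih =>
    obtain ⟨w, x⟩ := s
    by_cases hwu : w = u
    · subst hwu
      rw [Pw_cons_adj _ _ _ huvne huv.symm, Pw_cons_same, Pw_cons_same]
      by_cases hgx : g * x = 1
      · rw [if_pos hgx, if_pos hgx]
        exact Relation.EqvGen.refl _
      · rw [if_neg hgx, if_neg hgx, Pw_cons_adj _ _ _ huvne huv.symm]
        exact Relation.EqvGen.refl _
    · by_cases hwv : w = v
      · subst hwv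
        rw [Pw_cons_same, Pw_cons_adj _ _ _ hwu huv, Pw_cons_same]
        by_cases hhx : h * x = 1
        · rw [if_pos hhx, if_pos hhx]
          exact Relation.EqvGen.refl _
        · rw [if_neg hhx, if_neg hhx, Pw_cons_adj _ _ _ hwu huv]
          exact Relation.EqvGen.refl _
      · by_cases hau : Γ.Adj u w <;> by_cases hav : Γ.Adj v w
        · rw [Pw_cons_adj _ _ _ hwv hav, Pw_cons_adj _ _ _ hwu hau,
            Pw_cons_adj _ _ _ hwu hau, Pw_cons_adj _ _ _ hwv hav]
          exact weq_cons _ ih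
        · rw [Pw_cons_nadj _ _ _ hwv hav, Pw_cons_adj _ _ _ (Ne.symm huvne) huv,
            Pw_cons_adj _ _ _ hwu hau, Pw_cons_nadj _ _ _ hwv hav]
          exact Relation.EqvGen.refl _
        · rw [Pw_cons_adj _ _ _ hwv hav, Pw_cons_nadj _ _ _ hwu hau,
            Pw_cons_nadj _ _ _ hwu hau, Pw_cons_adj _ _ _ huvne huv.symm,
            Pw_cons_adj _ _ _ hwv hav]
          exact Relation.EqvGen.refl _
        · rw [Pw_cons_nadj _ _ _ hwv hav, Pw_cons_adj _ _ _ (Ne.symm huvne) huv,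
            Pw_cons_nadj _ _ _ hwu hau, Pw_cons_adj _ _ _ huvne huv.symm,
            Pw_cons_nadj _ _ _ hwv hav]
          exact Relation.EqvGen.rel _ _
            ⟨[], ⟨w, x⟩ :: l, ⟨v, h⟩, ⟨u, g⟩, huv.symm, by simp, by simp⟩


variable (Γ G)

/-- Reduced words. -/
abbrev RWord := {l : List (Σ u, G u) // RedW Γ G l}

instance rsetoid : Setoid (RWord Γ G) where
  r a b := WEq Γ G a.1 b.1
  iseqv := ⟨fun _ => Relation.EqvGen.refl _, fun h => h.symm _ _,
    fun h1 h2 => h1.trans _ _ _ h2⟩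

/-- Reduced words up to adjacent swaps. -/
abbrev NW := Quotient (rsetoid Γ G)

/-- The action of `g ∈ G v` on reduced words. -/
noncomputable def pact (v : V) (g : G v) (l : RWord Γ G) : RWord Γ G :=
  if hg : g = 1 then l else ⟨Pw Γ G v g l.1, redW_Pw hg l.2⟩

noncomputable def pactN (v : V) (g : G v) : NW Γ G → NW Γ G :=
  Quotient.map (pact Γ G v g) (by
    intro a b hab
    show WEq Γ G _ _
    unfold pact
    split
    · exact hab
    · exact Pw_weq v g hab)

variable {Γ G}

@[simp] lemma pactN_mk (v : V) (g : G v) (a : RWord Γ G) :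
    pactN Γ G v g (Quotient.mk _ a) = Quotient.mk _ (pact Γ G v g a) := rfl

lemma pactN_one (v : V) : pactN Γ G v 1 = id := by
  funext x
  induction x using Quotient.ind with | _ a =>
  show Quotient.mk _ (pact Γ G v 1 a) = Quotient.mk _ a
  rw [pact, dif_pos rfl]

lemma pactN_mul (v : V) (g h : G v) (x : NW Γ G) :
    pactN Γ G v g (pactN Γ G v h x) = pactN Γ G v (g * h) x := by
  induction x using Quotient.ind with | _ a =>
  rw [pactN_mk, pactN_mk, pactN_mk]
  refine Quotient.sound ?_
  show WEq Γ G _ _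
  by_cases hh : h = 1
  · subst hh
    rw [mul_one]
    rw [show pact Γ G v 1 a = a from by rw [pact, dif_pos rfl]]
    exact Relation.EqvGen.refl _
  · by_cases hg : g = 1
    · subst hg
      rw [one_mul]
      rw [show pact Γ G v 1 (pact Γ G v h a) = pact Γ G v h a from by rw [pact, dif_pos rfl]]
      exact Relation.EqvGen.refl _
    · have h1 : pact Γ G v h a = ⟨Pw Γ G v h a.1, redW_Pw hh a.2⟩ := by rw [pact, dif_neg hh]
      have h2 : (pact Γ G v g ⟨Pw Γ G v h a.1, redW_Pw hh a.2⟩).1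
          = Pw Γ G v g (Pw Γ G v h a.1) := by rw [pact, dif_neg hg]
      rw [h1, h2]
      by_cases hgh : g * h = 1
      · rw [show pact Γ G v (g * h) a = a from by rw [pact, dif_pos hgh]]
        have := Pw_comp hg hh a.2 (v := v) (g := g) (h := h)
        rwa [if_pos hgh] at this
      · rw [show (pact Γ G v (g * h) a).1 = Pw Γ G v (g * h) a.1 from by
          rw [pact, dif_neg hgh]]
        have := Pw_comp hg hh a.2 (v := v) (g := g) (h := h)
        rwa [if_neg hgh] at this

lemma pactN_commute {u v : V} (huv : Γ.Adj u v) (g : G u) (h : G v) (x : NW Γ G) :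
    pactN Γ G u g (pactN Γ G v h x) = pactN Γ G v h (pactN Γ G u g x) := by
  induction x using Quotient.ind with | _ a =>
  rw [pactN_mk, pactN_mk, pactN_mk, pactN_mk]
  refine Quotient.sound ?_
  show WEq Γ G _ _
  by_cases hh : h = 1
  · subst hh
    rw [show pact Γ G v 1 a = a from by rw [pact, dif_pos rfl],
      show pact Γ G v 1 (pact Γ G u g a) = pact Γ G u g a from by rw [pact, dif_pos rfl]]
    exact Relation.EqvGen.refl _
  · by_cases hg : g = 1
    · subst hg
      rw [show pact Γ G u 1 (pact Γ G v h a) = pact Γ G v h a from by rw [pact, dif_pos rfl],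
        show pact Γ G u 1 a = a from by rw [pact, dif_pos rfl]]
      exact Relation.EqvGen.refl _
    · rw [show pact Γ G v h a = ⟨Pw Γ G v h a.1, redW_Pw hh a.2⟩ from by rw [pact, dif_neg hh],
        show pact Γ G u g a = ⟨Pw Γ G u g a.1, redW_Pw hg a.2⟩ from by rw [pact, dif_neg hg]]
      rw [show (pact Γ G u g ⟨Pw Γ G v h a.1, redW_Pw hh a.2⟩).1
          = Pw Γ G u g (Pw Γ G v h a.1) from by rw [pact, dif_neg hg]]
      rw [show (pact Γ G v h ⟨Pw Γ G u g a.1, redW_Pw hg a.2⟩).1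
          = Pw Γ G v h (Pw Γ G u g a.1) from by rw [pact, dif_neg hh]]
      exact Pw_commute huv g h a.1

variable (Γ G)

/-- The permutation of `NW` induced by `g ∈ G v`. -/
noncomputable def pperm (v : V) (g : G v) : Equiv.Perm (NW Γ G) where
  toFun := pactN Γ G v g
  invFun := pactN Γ G v g⁻¹
  left_inv := fun x => by rw [pactN_mul, inv_mul_cancel, pactN_one]; rfl
  right_inv := fun x => by rw [pactN_mul, mul_inv_cancel, pactN_one]; rfl

/-- The homomorphism `G v →* Perm (NW)`. -/
noncomputable def phom (v : V) : G v →* Equiv.Perm (NW Γ G) where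
  toFun := pperm Γ G v
  map_one' := by
    refine Equiv.ext fun x => ?_
    show pactN Γ G v 1 x = x
    rw [pactN_one]; rfl
  map_mul' := fun g h => by
    refine Equiv.ext fun x => ?_
    show pactN Γ G v (g * h) x = pactN Γ G v g (pactN Γ G v h x)
    rw [pactN_mul]

/-- The homomorphism from the free product. -/
noncomputable def bigPhi0 : CoprodI G →* Equiv.Perm (NW Γ G) :=
  CoprodI.lift (phom Γ G)

lemma rels_le_ker : graphProductRels Γ G ⊆ (bigPhi0 Γ G).ker := by
  rintro x ⟨u, v, g, h, huv, rfl⟩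
  have hc : Commute (phom Γ G u g) (phom Γ G v h) := by
    refine Equiv.ext fun x => ?_
    show pactN Γ G u g (pactN Γ G v h x) = pactN Γ G v h (pactN Γ G u g x)
    exact pactN_commute huv g h x
  rw [SetLike.mem_coe, MonoidHom.mem_ker]
  simp only [map_mul, map_inv, bigPhi0, CoprodI.lift_of]
  exact commutatorElement_eq_one_iff_commute.2 hc

/-- The homomorphism from the graph product. -/
noncomputable def bigPhi : GraphProduct Γ G →* Equiv.Perm (NW Γ G) :=
  QuotientGroup.lift _ (bigPhi0 Γ G)
    (Subgroup.normalClosure_le_normal (rels_le_ker Γ G))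

lemma bigPhi_of {v : V} (g : G v) :
    bigPhi Γ G (GraphProduct.of Γ G g) = phom Γ G v g := by
  have h1 : GraphProduct.of Γ G (u := v) g
      = QuotientGroup.mk' (Subgroup.normalClosure (graphProductRels Γ G)) (CoprodI.of g) :=
    rfl
  rw [h1]
  have h2 : bigPhi Γ G ((QuotientGroup.mk'
      (Subgroup.normalClosure (graphProductRels Γ G))) (CoprodI.of g))
      = bigPhi0 Γ G (CoprodI.of g) := rfl
  rw [h2, bigPhi0, CoprodI.lift_of]

variable {Γ G}

lemma Pw_cons_of_redW {v : V} {x : G v} {l : List (Σ u, G u)}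
    (hl : RedW Γ G (⟨v, x⟩ :: l)) : WEq Γ G (Pw Γ G v x l) (⟨v, x⟩ :: l) := by
  rcases Pw_shape v x l with ⟨a, b, hab, hadj, hP, _⟩ | ⟨a, y, b, hab, hadj, _⟩
  · rw [hP, hab]
    exact (weq_bubble x b hadj).symm _ _
  · exact (noPull_of_redW_cons hl a y b hab hadj).elim

lemma bigPhi_wordProd {l : List (Σ u, G u)} (hl : RedW Γ G l) :
    bigPhi Γ G (wordProd Γ G l) (Quotient.mk _ (⟨[], redW_nil⟩ : RWord Γ G))
      = Quotient.mk _ (⟨l, hl⟩ : RWord Γ G) := by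
  induction l with
  | nil =>
    rw [wordProd]
    simp only [List.map_nil, List.prod_nil, map_one]
    rfl
  | cons s l ih =>
    obtain ⟨v, x⟩ := s
    have hl' := redW_tail hl
    have hx : x ≠ 1 := hl.1 ⟨v, x⟩ (by simp)
    rw [wordProd, List.map_cons, List.prod_cons, map_mul, Equiv.Perm.mul_apply]
    have ihe : bigPhi Γ G (wordProd Γ G l) (Quotient.mk _ (⟨[], redW_nil⟩ : RWord Γ G))
        = Quotient.mk _ (⟨l, hl'⟩ : RWord Γ G) := ih hl'
    rw [show (List.map (fun s => GraphProduct.of Γ G s.2) l).prod = wordProd Γ G l from rfl]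
    rw [ihe, bigPhi_of]
    have key : pactN Γ G v x (Quotient.mk (rsetoid Γ G) ⟨l, hl'⟩)
        = Quotient.mk (rsetoid Γ G) ⟨⟨v, x⟩ :: l, hl⟩ := by
      rw [pactN_mk]
      refine Quotient.sound ?_
      show WEq Γ G _ _
      rw [show pact Γ G v x ⟨l, hl'⟩ = ⟨Pw Γ G v x l, redW_Pw hx hl'⟩ from by
        rw [pact, dif_neg hx]]
      exact Pw_cons_of_redW hl
    exact key

/-- Graphically reduced words are reduced in our sense. -/
lemma redW_of_GR {l : List (Σ u, G u)} (h : GraphicallyReduced Γ G l) : RedW Γ G l := by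
  refine ⟨h.1, fun w hbad => ?_⟩
  obtain ⟨p, q, hpq, hP, hQ, hmid⟩ := hbad
  rw [List.getElem?_eq_some_iff] at hP hQ
  obtain ⟨hp, hP⟩ := hP
  obtain ⟨hq, hQ⟩ := hQ
  simp only [List.length_map] at hp hq
  rw [List.getElem_map] at hP hQ
  obtain ⟨k, hk, hk1, hk2, hnadj⟩ := h.2 p q hp hq hpq (by
    rw [List.get_eq_getElem, List.get_eq_getElem, hP, hQ])
  refine hnadj ?_
  have hsome : (l.map Sigma.fst)[k]? = some ((l.get ⟨k, hk⟩).1) := by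
    rw [List.getElem?_eq_some_iff]
    exact ⟨by simpa using hk, by rw [List.getElem_map]; rfl⟩
  have hadj := hmid k _ hk1 hk2 hsome
  rw [List.get_eq_getElem, hP]
  exact hadj

end words

end GPNF

/-- A nonempty word of length at least two which represents the identity of the graph
product is not graphically reduced. -/
theorem not_graphically_reduced_of_eq_one {V : Type*} (Γ : SimpleGraph V)
    (G : V → Type*) [∀ v, Group (G v)] [∀ v, Nontrivial (G v)]
    (l : List (Σ u, G u)) (hn : 2 ≤ l.length) (h : wordProd Γ G l = 1) :
    ¬ GraphicallyReduced Γ G l := by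
  intro hGR
  have hl : GPNF.RedW Γ G l := GPNF.redW_of_GR hGR
  have heval := GPNF.bigPhi_wordProd hl
  rw [h, map_one, Equiv.Perm.one_apply] at heval
  have hweq := Quotient.exact heval
  have hlen := GPNF.weq_length hweq
  simp at hlen
  omega
end

section
/- Let Γ be a simplicial graph, 𝒢 = {G_u} a collection of nontrivial groups indexed by V(Γ), Λ ⊂ Γ an induced subgraph, and ℋ = {G_u : u ∈ V(Λ)}. Then the canonical homomorphism from the graph product Λℋ to Γ𝒢 (sending each vertex-group identically into the corresponding vertex-group) is injective, i.e., it induces an isomorphism onto the subgroup ⟨Λ⟩ of Γ𝒢 generated by the vertex-groups labelling vertices of Λ. -/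
open Monoid

section Aux

variable {V : Type*} (Γ : SimpleGraph V) (G : V → Type*) [∀ v, Group (G v)]
  {H : Type*} [Group H]

lemma GraphProduct.of_commute {u v : V} (h : Γ.Adj u v) (g : G u) (g' : G v) :
    Commute (GraphProduct.of Γ G g) (GraphProduct.of Γ G g') := by
  have hmem : (CoprodI.of g * CoprodI.of g' * (CoprodI.of g)⁻¹ * (CoprodI.of g')⁻¹) ∈
      Subgroup.normalClosure (graphProductRels Γ G) :=
    Subgroup.subset_normalClosure ⟨u, v, g, g', h, rfl⟩
  have h1 : GraphProduct.of Γ G g * GraphProduct.of Γ G g' *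
      (GraphProduct.of Γ G g)⁻¹ * (GraphProduct.of Γ G g')⁻¹ = 1 := by
    have := (QuotientGroup.eq_one_iff
      (CoprodI.of g * CoprodI.of g' * (CoprodI.of g)⁻¹ * (CoprodI.of g')⁻¹)).2 hmem
    exact this
  rw [← commutatorElement_eq_one_iff_commute]
  simpa [commutatorElement_def, mul_assoc] using h1

def GraphProduct.lift (f : ∀ v, G v →* H)
    (hf : ∀ u v, Γ.Adj u v → ∀ (g : G u) (g' : G v), Commute (f u g) (f v g')) :
    GraphProduct Γ G →* H :=
  QuotientGroup.lift _ (CoprodI.lift f) (by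
    refine Subgroup.normalClosure_le_normal ?_
    rintro x ⟨u, v, g, g', hadj, rfl⟩
    have := (hf u v hadj g g').commutator_eq
    simp only [SetLike.mem_coe, MonoidHom.mem_ker, map_mul, map_inv, CoprodI.lift_of]
    rw [← commutatorElement_def]
    rw [commutatorElement_eq_one_iff_commute]
    exact hf u v hadj g g')

@[simp] lemma GraphProduct.lift_of (f : ∀ v, G v →* H)
    (hf : ∀ u v, Γ.Adj u v → ∀ (g : G u) (g' : G v), Commute (f u g) (f v g'))
    {u : V} (g : G u) :
    GraphProduct.lift Γ G f hf (GraphProduct.of Γ G g) = f u g := by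
  show QuotientGroup.lift _ (CoprodI.lift f) _
    ((CoprodI.of g : CoprodI G) :
      CoprodI G ⧸ Subgroup.normalClosure (graphProductRels Γ G)) = f u g
  rw [QuotientGroup.lift_mk', CoprodI.lift_of]

lemma GraphProduct.hom_ext {f g : GraphProduct Γ G →* H}
    (h : ∀ (u : V) (x : G u), f (GraphProduct.of Γ G x) = g (GraphProduct.of Γ G x)) :
    f = g := by
  have hsur : Function.Surjective
      (QuotientGroup.mk' (Subgroup.normalClosure (graphProductRels Γ G))) :=
    QuotientGroup.mk'_surjective _
  refine (MonoidHom.cancel_right hsur).1 ?_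
  exact CoprodI.ext_hom _ _ fun u => MonoidHom.ext fun x => h u x

end Aux

/-- The canonical homomorphism from the graph product over an induced subgraph (on the
corresponding subcollection of vertex groups) to the full graph product exists and is
injective. -/
theorem canonical_map_of_induced_subgraph_injective {V : Type*} (Γ : SimpleGraph V)
    (G : V → Type*) [∀ v, Group (G v)] [∀ v, Nontrivial (G v)] (S : Set V) :
    ∃ φ : GraphProduct (Γ.induce S) (fun u : S => G u) →* GraphProduct Γ G,
      (∀ (u : S) (g : G u),
        φ (GraphProduct.of (Γ.induce S) (fun u : S => G u) g) = GraphProduct.of Γ G g) ∧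
      Function.Injective φ := by
  classical
  set fS : ∀ u : S, G u →* GraphProduct Γ G :=
    fun u => GraphProduct.of Γ G (u := (u : V)) with hfS
  have hcS : ∀ (u v : S), (Γ.induce S).Adj u v → ∀ (g : G u) (g' : G v),
      Commute (fS u g) (fS v g') :=
    fun u v h g g' => GraphProduct.of_commute Γ G h g g'
  set φ : GraphProduct (Γ.induce S) (fun u : S => G u) →* GraphProduct Γ G :=
    GraphProduct.lift (Γ.induce S) (fun u : S => G u) fS hcS with hφ
  have hof : ∀ (u : S) (g : G u),
      φ (GraphProduct.of (Γ.induce S) (fun u : S => G u) g) = GraphProduct.of Γ G g :=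
    fun u g => GraphProduct.lift_of (Γ.induce S) (fun u : S => G u) fS hcS g
  refine ⟨φ, hof, ?_⟩
  set f : ∀ v : V, G v →* GraphProduct (Γ.induce S) (fun u : S => G u) :=
    fun v => if h : v ∈ S then GraphProduct.of (Γ.induce S) (fun u : S => G u) (u := ⟨v, h⟩)
      else 1 with hfdef
  have hcomm : ∀ u v, Γ.Adj u v → ∀ (g : G u) (g' : G v), Commute (f u g) (f v g') := by
    intro u v hadj g g'
    by_cases hu : u ∈ S
    · by_cases hv : v ∈ S
      · simp only [hfdef, dif_pos hu, dif_pos hv]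
        exact GraphProduct.of_commute (Γ.induce S) (fun u : S => G u)
          (u := ⟨u, hu⟩) (v := ⟨v, hv⟩) hadj g g'
      · simp [hfdef, dif_neg hv, Commute, SemiconjBy]
    · simp [hfdef, dif_neg hu, Commute, SemiconjBy]
  set r : GraphProduct Γ G →* GraphProduct (Γ.induce S) (fun u : S => G u) :=
    GraphProduct.lift Γ G f hcomm with hr
  have hleft : ∀ x, r (φ x) = x := by
    have : r.comp φ = MonoidHom.id _ := by
      apply GraphProduct.hom_ext
      intro u x
      simp only [MonoidHom.comp_apply, MonoidHom.id_apply, hof]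
      rw [hr, GraphProduct.lift_of]
      simp only [hfdef]
      rw [dif_pos u.2]
    intro x
    exact DFunLike.congr_fun this x
  exact Function.LeftInverse.injective hleft
end
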